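/- arXiv:2202.01378 — 4 statements merged into one kernel-verified Lean document; each statement's English description precedes it below -/
import Mathlib

section
/- Let 𝒞 be a root class of groups consisting only of periodic groups, and let A be an abelian group. Then A is 𝒞-bounded if and only if A is weakly 𝒞-bounded and each primary 𝔓(𝒞)-component of A itself has finite exponent and cardinality not exceeding the cardinality of some 𝒞-group. -/
universe u

/-- A class of groups: a property of groups in universe `u`. -/
abbrev GroupClass : Type (u + 1) := ∀ (G : Type u) [Group G], Prop

namespace Paper

/-- The class `C` consists only of periodic (torsion) groups. -/
def IsPeriodicClass (C : GroupClass.{u}) : Prop :=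
  ∀ (G : Type u) [Group G], C G → ∀ g : G, IsOfFinOrder g

/-- `C` is a root class: closed under isomorphism, contains a non-trivial group, and is
closed under subgroups, extensions, and Cartesian powers `Y → X` with `X, Y ∈ C`. -/
def IsRootClass (C : GroupClass.{u}) : Prop :=
  (∀ (G H : Type u) [Group G] [Group H], (G ≃* H) → C G → C H) ∧
  (∃ (G : Type u) (_ : Group G), C G ∧ Nontrivial G) ∧
  (∀ (G : Type u) [Group G], C G → ∀ H : Subgroup G, C H) ∧
  (∀ (G : Type u) [Group G] (N : Subgroup G) [N.Normal], C N → C (G ⧸ N) → C G) ∧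
  (∀ (X Y : Type u) [Group X] [Group Y], C X → C Y → C (Y → X))

/-- `𝔓(C)`: the set of primes dividing the order of some element of some `C`-group. -/
def classPrimes (C : GroupClass.{u}) : Set ℕ :=
  {p | p.Prime ∧ ∃ (G : Type u) (_ : Group G), C G ∧ ∃ g : G, p ∣ orderOf g}

/-- `Y` is `𝔓′`-isolated in `X` (here `P` plays the role of `𝔓`). -/
def IsolatedIn {X : Type u} [Group X] (P : Set ℕ) (Y : Subgroup X) : Prop :=
  ∀ x : X, ∀ q : ℕ, q.Prime → q ∉ P → x ^ q ∈ Y → x ∈ Y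

/-- `X` has no `𝔓′`-torsion. -/
def NoPrimeTorsion (P : Set ℕ) (X : Type u) [Group X] : Prop :=
  ∀ x : X, ∀ q : ℕ, q.Prime → q ∉ P → x ^ q = 1 → x = 1

/-- `q` is a `P`-number: a positive integer all of whose prime divisors lie in `P`. -/
def IsPNumber (P : Set ℕ) (q : ℕ) : Prop :=
  0 < q ∧ ∀ p : ℕ, p.Prime → p ∣ q → p ∈ P

/-- The `𝔓′`-isolator of `Y` in `X`: the smallest `𝔓′`-isolated subgroup containing `Y`. -/
def isolator {X : Type u} [Group X] (P : Set ℕ) (Y : Subgroup X) : Subgroup X :=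
  sInf {Z : Subgroup X | Y ≤ Z ∧ IsolatedIn P Z}

/-- The set `𝔓′-Rt(X, Y)` of `𝔓′`-roots of elements of `Y`. -/
def rootSet {X : Type u} [Group X] (P : Set ℕ) (Y : Subgroup X) : Set X :=
  {x : X | ∃ q : ℕ, IsPNumber Pᶜ q ∧ x ^ q ∈ Y}

/-- `Y` is `C`-separable in `X`. -/
def SeparableIn (C : GroupClass.{u}) {X : Type u} [Group X] (Y : Subgroup X) : Prop :=
  ∀ x : X, x ∉ Y → ∃ (Q : Type u) (_ : Group Q) (σ : X →* Q),
    C Q ∧ Function.Surjective σ ∧ σ x ∉ Y.map σ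

/-- `X` has the property `C`-Sep: every `𝔓(C)′`-isolated subgroup is `C`-separable. -/
def HasSepProp (C : GroupClass.{u}) (X : Type u) [Group X] : Prop :=
  ∀ Y : Subgroup X, IsolatedIn (classPrimes C) Y → SeparableIn C Y

/-- `X` is residually a `D`-group. -/
def Residually (D : GroupClass.{u}) (X : Type u) [Group X] : Prop :=
  ∀ x : X, x ≠ 1 → ∃ (Q : Type u) (_ : Group Q) (σ : X →* Q),
    D Q ∧ Function.Surjective σ ∧ σ x ≠ 1

/-- Every primary `P`-component of every quotient of `A` has finite exponent
(for abelian `A` this says `A` is weakly bounded w.r.t. the set of primes `P`). -/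
def WeaklyBounded (P : Set ℕ) (A : Type u) [Group A] : Prop :=
  ∀ (H : Subgroup A) [H.Normal], ∀ p ∈ P,
    ∃ e : ℕ, 0 < e ∧ ∀ x : A ⧸ H, (∃ n : ℕ, x ^ p ^ n = 1) → x ^ e = 1

/-- Every primary `𝔓(C)`-component of every quotient of `A` has finite exponent and
cardinality not exceeding the cardinality of some `C`-group. -/
def Bounded (C : GroupClass.{u}) (A : Type u) [Group A] : Prop :=
  ∀ (H : Subgroup A) [H.Normal], ∀ p ∈ classPrimes C,
    (∃ e : ℕ, 0 < e ∧ ∀ x : A ⧸ H, (∃ n : ℕ, x ^ p ^ n = 1) → x ^ e = 1) ∧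
    ∃ (G : Type u) (_ : Group G), C G ∧
      Cardinal.mk {x : A ⧸ H // ∃ n : ℕ, x ^ p ^ n = 1} ≤ Cardinal.mk G

/-- The factor `A / B` (for `B ≤ A` subgroups of an ambient group) is `C`-bounded. -/
def FactorBounded (C : GroupClass.{u}) {X : Type u} [Group X] (B A : Subgroup X)
    (hN : (B.subgroupOf A).Normal) : Prop :=
  letI := hN
  Bounded C (↥A ⧸ B.subgroupOf A)

/-- The factor `A / B` is weakly bounded w.r.t. the set of primes `P`. -/
def FactorWeaklyBounded (P : Set ℕ) {X : Type u} [Group X] (B A : Subgroup X)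
    (hN : (B.subgroupOf A).Normal) : Prop :=
  letI := hN
  WeaklyBounded P (↥A ⧸ B.subgroupOf A)

/-- `X` is a `C`-bounded nilpotent group: it has a finite central series with
`C`-bounded abelian factors. -/
def BoundedNilpotent (C : GroupClass.{u}) (X : Type u) [Group X] : Prop :=
  ∃ (n : ℕ) (H : ℕ → Subgroup X),
    H 0 = ⊥ ∧ H n = ⊤ ∧ (∀ i, H i ≤ H (i + 1)) ∧
    (∀ i, ∀ x ∈ H (i + 1), ∀ g : X, x * g * x⁻¹ * g⁻¹ ∈ H i) ∧
    (∀ i, ∀ hN : ((H i).subgroupOf (H (i + 1))).Normal, FactorBounded C (H i) (H (i + 1)) hN)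

/-- `X` is a weakly `C`-bounded nilpotent group (`P = 𝔓(C)`). -/
def WeaklyBoundedNilpotent (P : Set ℕ) (X : Type u) [Group X] : Prop :=
  ∃ (n : ℕ) (H : ℕ → Subgroup X),
    H 0 = ⊥ ∧ H n = ⊤ ∧ (∀ i, H i ≤ H (i + 1)) ∧
    (∀ i, ∀ x ∈ H (i + 1), ∀ g : X, x * g * x⁻¹ * g⁻¹ ∈ H i) ∧
    (∀ i, ∀ hN : ((H i).subgroupOf (H (i + 1))).Normal,
      FactorWeaklyBounded P (H i) (H (i + 1)) hN)

/-- `X` is a `C`-bounded solvable group: it has a finite subnormal series with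
`C`-bounded abelian factors. -/
def BoundedSolvable (C : GroupClass.{u}) (X : Type u) [Group X] : Prop :=
  ∃ (n : ℕ) (H : ℕ → Subgroup X),
    H 0 = ⊥ ∧ H n = ⊤ ∧ (∀ i, H i ≤ H (i + 1)) ∧
    (∀ i, ∀ g ∈ H (i + 1), ∀ x ∈ H i, g * x * g⁻¹ ∈ H i) ∧
    (∀ i, ∀ x ∈ H (i + 1), ∀ y ∈ H (i + 1), x * y * x⁻¹ * y⁻¹ ∈ H i) ∧
    (∀ i, ∀ hN : ((H i).subgroupOf (H (i + 1))).Normal, FactorBounded C (H i) (H (i + 1)) hN)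

/-- `X` is a weakly `C`-bounded solvable group (`P = 𝔓(C)`). -/
def WeaklyBoundedSolvable (P : Set ℕ) (X : Type u) [Group X] : Prop :=
  ∃ (n : ℕ) (H : ℕ → Subgroup X),
    H 0 = ⊥ ∧ H n = ⊤ ∧ (∀ i, H i ≤ H (i + 1)) ∧
    (∀ i, ∀ g ∈ H (i + 1), ∀ x ∈ H i, g * x * g⁻¹ ∈ H i) ∧
    (∀ i, ∀ x ∈ H (i + 1), ∀ y ∈ H (i + 1), x * y * x⁻¹ * y⁻¹ ∈ H i) ∧
    (∀ i, ∀ hN : ((H i).subgroupOf (H (i + 1))).Normal,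
      FactorWeaklyBounded P (H i) (H (i + 1)) hN)

/-- The class `C-BN` of `C`-bounded nilpotent groups. -/
def BNclass (C : GroupClass.{u}) : GroupClass.{u} := fun G _ => BoundedNilpotent C G

/-- The class `C-BN_{𝔓(C)}` of `𝔓(C)′`-torsion-free `C`-bounded nilpotent groups. -/
def BNPclass (C : GroupClass.{u}) : GroupClass.{u} :=
  fun G _ => BoundedNilpotent C G ∧ NoPrimeTorsion (classPrimes C) G

/-- The class `𝒩C` of nilpotent `C`-groups. -/
def NilpClass (C : GroupClass.{u}) : GroupClass.{u} := fun G _ => C G ∧ Group.IsNilpotent G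

end Paper

namespace Paper

section StatementThirteenAux

open Cardinal


lemma mem_closure_range_repr {A : Type u} [CommGroup A] {ι : Type*} (g : ι → A) (x : A)
    (hx : x ∈ Subgroup.closure (Set.range g)) :
    ∃ (F : Finset ι) (c : ι → ℤ), x = ∏ i ∈ F, g i ^ c i := by
  classical
  induction hx using Subgroup.closure_induction with
  | mem x hx =>
    obtain ⟨i, rfl⟩ := hx
    exact ⟨{i}, fun _ => 1, by simp⟩
  | one => exact ⟨∅, 0, by simp⟩
  | mul x y hx hy ihx ihy =>
    obtain ⟨F₁, c₁, rfl⟩ := ihx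
    obtain ⟨F₂, c₂, rfl⟩ := ihy
    refine ⟨F₁ ∪ F₂, (fun i => (if i ∈ F₁ then c₁ i else 0) + (if i ∈ F₂ then c₂ i else 0)), ?_⟩
    have h1 : ∏ i ∈ F₁, g i ^ c₁ i = ∏ i ∈ F₁ ∪ F₂, g i ^ (if i ∈ F₁ then c₁ i else 0) := by
      rw [show (∏ i ∈ F₁, g i ^ c₁ i) = ∏ i ∈ F₁, g i ^ (if i ∈ F₁ then c₁ i else 0) from
        Finset.prod_congr rfl fun i hi => by simp [hi]]
      exact Finset.prod_subset Finset.subset_union_left (fun i _ hi => by simp [hi])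
    have h2 : ∏ i ∈ F₂, g i ^ c₂ i = ∏ i ∈ F₁ ∪ F₂, g i ^ (if i ∈ F₂ then c₂ i else 0) := by
      rw [show (∏ i ∈ F₂, g i ^ c₂ i) = ∏ i ∈ F₂, g i ^ (if i ∈ F₂ then c₂ i else 0) from
        Finset.prod_congr rfl fun i hi => by simp [hi]]
      exact Finset.prod_subset Finset.subset_union_right (fun i _ hi => by simp [hi])
    rw [h1, h2, ← Finset.prod_mul_distrib]
    exact Finset.prod_congr rfl fun i _ => (zpow_add (g i) _ _).symm
  | inv x hx ihx =>
    obtain ⟨F, c, rfl⟩ := ihx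
    exact ⟨F, -c, by simp [← Finset.prod_inv_distrib, zpow_neg]⟩

lemma mk_addClosure_le {M : Type u} [AddCommGroup M] (X : Set M) :
    #(AddSubgroup.closure X) ≤ max #X ℵ₀ := by
  classical
  let f : List (X × ℤ) → M := fun l => (l.map (fun q => q.2 • (q.1 : M))).sum
  have hneg : ∀ l : List (X × ℤ), f (l.map (fun q => (q.1, -q.2))) = -(f l) := by
    intro l
    induction l with
    | nil => simp [f]
    | cons a t ih => simp [f] at ih ⊢; rw [ih]; abel
  have hmem : ∀ m ∈ AddSubgroup.closure X, m ∈ Set.range f := by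
    intro m hm
    induction hm using AddSubgroup.closure_induction with
    | mem x hx => exact ⟨[(⟨x, hx⟩, 1)], by simp [f]⟩
    | zero => exact ⟨[], by simp [f]⟩
    | add x y hx hy ihx ihy =>
      obtain ⟨l₁, rfl⟩ := ihx; obtain ⟨l₂, rfl⟩ := ihy
      exact ⟨l₁ ++ l₂, by simp [f]⟩
    | neg x hx ihx =>
      obtain ⟨l, rfl⟩ := ihx
      exact ⟨l.map (fun q => (q.1, -q.2)), hneg l⟩
  calc #(AddSubgroup.closure X) ≤ #(Set.range f) := mk_le_mk_of_subset hmem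
    _ ≤ #(List (X × ℤ)) := mk_range_le
    _ ≤ max ℵ₀ #(X × ℤ) := mk_list_le_max _
    _ ≤ max #X ℵ₀ := by
        rw [mk_prod, mk_int, lift_aleph0, lift_id']
        refine max_le (le_max_right _ _) (le_trans (mul_le_max _ _) ?_)
        rw [max_assoc, max_self]


/-- the p-primary torsion subgroup of a CommGroup -/
def pTorSub (p : ℕ) (G : Type u) [CommGroup G] : Subgroup G where
  carrier := {x | ∃ n : ℕ, x ^ p ^ n = 1}
  one_mem' := ⟨0, one_pow _⟩
  mul_mem' := by
    rintro a b ⟨n, hn⟩ ⟨m, hm⟩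
    refine ⟨n + m, ?_⟩
    rw [mul_pow, pow_add]
    rw [pow_mul, hn, one_pow, mul_comm (p^n), pow_mul, hm, one_pow, one_mul]
  inv_mem' := by
    rintro a ⟨n, hn⟩
    exact ⟨n, by rw [inv_pow, hn, inv_one]⟩

lemma pTorSub_mk (p : ℕ) (G : Type u) [CommGroup G] :
    #(pTorSub p G) = #{x : G // ∃ n : ℕ, x ^ p ^ n = 1} := rfl

lemma pred_mul {τ κ μ : Cardinal.{u}} (hκ : κ ≤ τ ∨ κ < ℵ₀) (hμ : μ ≤ τ ∨ μ < ℵ₀) :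
    κ * μ ≤ τ ∨ κ * μ < ℵ₀ := by
  rcases le_or_gt ℵ₀ τ with hτ | hτ
  · left
    have hκ' : κ ≤ τ := hκ.elim id (fun h => h.le.trans hτ)
    have hμ' : μ ≤ τ := hμ.elim id (fun h => h.le.trans hτ)
    calc κ * μ ≤ τ * τ := mul_le_mul' hκ' hμ'
      _ = τ := mul_eq_self hτ
  · right
    exact mul_lt_aleph0 (hκ.elim (fun h => h.trans_lt hτ) id) (hμ.elim (fun h => h.trans_lt hτ) id)

-- exponent bound on p-primary elements from a mixed exponent
lemma ppow_exponent {G : Type u} [CommGroup G] {p e : ℕ} (hp : p.Prime) (he : 0 < e)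
    {x : G} (hx : ∃ n : ℕ, x ^ p ^ n = 1) (hxe : x ^ e = 1) : x ^ p ^ e = 1 := by
  obtain ⟨n, hn⟩ := hx
  have h1 : orderOf x ∣ p ^ n := orderOf_dvd_of_pow_eq_one hn
  obtain ⟨k, hk, hko⟩ := (Nat.dvd_prime_pow hp).mp h1
  have h2 : p ^ k ∣ e := hko ▸ orderOf_dvd_of_pow_eq_one hxe
  have h3 : p ^ k ≤ e := Nat.le_of_dvd he h2
  have h4 : k ≤ e := le_trans (Nat.le_of_lt (Nat.lt_pow_self (n := k) hp.one_lt)) h3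
  exact orderOf_dvd_iff_pow_eq_one.mp (hko ▸ pow_dvd_pow p h4)


lemma pTorSub_mem {p : ℕ} {G : Type u} [CommGroup G] (x : G) :
    x ∈ pTorSub p G ↔ ∃ n : ℕ, x ^ p ^ n = 1 := Iff.rfl

lemma exists_indep_seq {Q : Type u} [CommGroup Q] {p : ℕ} (hp : p.Prime)
    (S : Subgroup Q) (U : Subgroup Q) (hS : ∀ x ∈ S, x ^ p = 1)
    (hUS : #U < #S) (hℵ : ℵ₀ ≤ #S) :
    ∃ s : ℕ → ↥S, ∀ (F : Finset ℕ) (n : ℕ → ℤ),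
      ((↑(∏ i ∈ F, (s i) ^ (n i)) : Q) ∈ U) → ∀ i ∈ F, (p : ℤ) ∣ n i := by
  classical
  haveI hfact : Fact p.Prime := ⟨hp⟩
  have hMp : ∀ x : Additive ↥S, p • x = 0 := by
    intro x
    have hx : ((Additive.toMul x : ↥S) : Q) ^ p = 1 := hS _ (Additive.toMul x).2
    have hx2 : (Additive.toMul x : ↥S) ^ p = 1 := by
      ext
      simpa using hx
    calc p • x = Additive.ofMul ((Additive.toMul x : ↥S) ^ p) := by
          rw [ofMul_pow]; rfl
      _ = 0 := by rw [hx2]; rfl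
  haveI : NeZero p := ⟨hp.ne_zero⟩
  haveI : Module (ZMod p) (Additive ↥S) := AddCommGroup.zmodModule hMp
  set Uset : Set (Additive ↥S) := {x | (↑(Additive.toMul x) : Q) ∈ U} with hUsetdef
  have hUsetcard : #Uset ≤ #U := by
    refine mk_le_of_injective (f := fun x : Uset => (⟨_, x.2⟩ : U)) ?_
    rintro ⟨x, hx⟩ ⟨y, hy⟩ h
    simp only [Subtype.mk.injEq] at h ⊢
    exact Additive.toMul.injective (Subtype.ext h)
  set U₀ : Submodule (ZMod p) (Additive ↥S) := Submodule.span (ZMod p) Uset with hU₀def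
  have hU₀sub : ∀ x ∈ U₀, x ∈ AddSubgroup.closure Uset := by
    intro x hx
    induction hx using Submodule.span_induction with
    | mem x h => exact AddSubgroup.subset_closure h
    | zero => exact zero_mem _
    | add x y _ _ hx hy => exact add_mem hx hy
    | smul c x _ hx =>
      have hc : c • x = c.val • x := by
        rw [← Nat.cast_smul_eq_nsmul (ZMod p) c.val x, ZMod.natCast_val, ZMod.cast_id]
      rw [hc]
      exact AddSubgroup.nsmul_mem _ hx _
  set W := (Additive ↥S) ⧸ U₀.toAddSubgroup with hWdef
  have hWp : ∀ x : W, p • x = 0 := by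
    intro x
    induction x using QuotientAddGroup.induction_on with
    | H z =>
      have h := map_nsmul (QuotientAddGroup.mk' U₀.toAddSubgroup) p z
      rw [hMp z, map_zero] at h
      exact h.symm
  haveI : Module (ZMod p) W := AddCommGroup.zmodModule hWp
  have hMS : #(Additive ↥S) = #S := (mk_congr Additive.ofMul).symm
  have hU₀c : #U₀ ≤ max #U ℵ₀ := by
    calc #U₀ ≤ #(AddSubgroup.closure Uset) := mk_le_mk_of_subset hU₀sub
      _ ≤ max #Uset ℵ₀ := mk_addClosure_le _
      _ ≤ max #U ℵ₀ := max_le_max hUsetcard le_rfl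
  have hsplit : #(Additive ↥S) = #W * #U₀ := by
    rw [mk_congr (AddSubgroup.addGroupEquivQuotientProdAddSubgroup (s := U₀.toAddSubgroup)),
      mk_prod, lift_id, lift_id]
    rfl
  have hWinf : Infinite W := by
    rw [Cardinal.infinite_iff]
    by_contra hfin
    have hWlt : #W < ℵ₀ := not_le.mp hfin
    rcases le_or_gt ℵ₀ #U with hUinf | hUfin
    · have hle : #(Additive ↥S) ≤ #U := by
        rw [hsplit]
        have h1 : #U₀ ≤ #U := hU₀c.trans (max_le le_rfl hUinf)
        calc #W * #U₀ ≤ #U * #U := mul_le_mul' (hWlt.le.trans hUinf) h1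
          _ = #U := mul_eq_self hUinf
      rw [hMS] at hle
      exact absurd hle (not_le.mpr hUS)
    · have hUsetfin : Uset.Finite := lt_aleph0_iff_set_finite.mp (hUsetcard.trans_lt hUfin)
      haveI : FiniteDimensional (ZMod p) U₀ := FiniteDimensional.span_of_finite _ hUsetfin
      haveI : Finite ↥U₀ := Module.finite_of_finite (ZMod p)
      have hlt : #(Additive ↥S) < ℵ₀ := by
        rw [hsplit]
        exact mul_lt_aleph0 hWlt (lt_aleph0_of_finite _)
      rw [hMS] at hlt
      exact absurd hℵ (not_le.mpr hlt)
  let b := Module.Basis.ofVectorSpace (ZMod p) W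
  haveI hbi : Infinite (Module.Basis.ofVectorSpaceIndex (ZMod p) W) := by
    rw [← not_finite_iff_infinite]
    intro hfin
    haveI : Module.Finite (ZMod p) W := Module.Finite.of_basis b
    haveI : Finite W := Module.finite_of_finite (ZMod p)
    exact hWinf.not_finite ‹Finite W›
  let emb := Infinite.natEmbedding (Module.Basis.ofVectorSpaceIndex (ZMod p) W)
  let w : ℕ → W := fun k => b (emb k)
  have hw : LinearIndependent (ZMod p) w := b.linearIndependent.comp emb emb.injective
  have hsur := QuotientAddGroup.mk'_surjective U₀.toAddSubgroup
  choose m hm using fun k => hsur (w k)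
  refine ⟨fun k => Additive.toMul (m k), ?_⟩
  intro F n hmem i hiF
  set σ : ↥S := ∏ i ∈ F, (Additive.toMul (m i) : ↥S) ^ (n i) with hσdef
  have hσU : Additive.ofMul σ ∈ U₀ := Submodule.subset_span (by
    show ((Additive.toMul (Additive.ofMul σ) : ↥S) : Q) ∈ U
    simpa using hmem)
  have hπ : (QuotientAddGroup.mk' U₀.toAddSubgroup) (Additive.ofMul σ) = 0 :=
    (QuotientAddGroup.eq_zero_iff _).mpr hσU
  have hofMul : Additive.ofMul σ = ∑ i ∈ F, n i • (m i) := by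
    rw [hσdef, ofMul_prod]
    exact Finset.sum_congr rfl fun j _ => by rw [ofMul_zpow]; simp
  have hsum : ∑ i ∈ F, n i • w i = 0 := by
    rw [← hπ, hofMul, map_sum]
    exact Finset.sum_congr rfl fun j _ => by rw [map_zsmul, hm j]
  have hz : ∀ j ∈ F, ((n j : ZMod p)) = 0 := by
    apply linearIndependent_iff'.mp hw F (fun j => ((n j : ℤ) : ZMod p))
    rw [← hsum]
    exact Finset.sum_congr rfl fun j _ => (Int.cast_smul_eq_zsmul _ _ _)
  exact (ZMod.intCast_zmod_eq_zero_iff_dvd _ _).mp (hz i hiF)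

lemma coreL1 {A : Type u} [CommGroup A] {P : Set ℕ} {p : ℕ} (hp : p.Prime) (hP : p ∈ P)
    (WB : WeaklyBounded P A) (H : Subgroup A) (S : Subgroup (A ⧸ H))
    (hS : ∀ x ∈ S, x ^ p = 1) :
    #(S) ≤ #{x : A // ∃ n : ℕ, x ^ p ^ n = 1} ∨ #S < ℵ₀ := by
  classical
  by_contra hcon
  push_neg at hcon
  have hτ : #{x : A // ∃ n : ℕ, x ^ p ^ n = 1} < #S := hcon.1
  have hℵ : ℵ₀ ≤ #S := hcon.2
  set U : Subgroup (A ⧸ H) := (pTorSub p A).map (QuotientGroup.mk' H) with hUdef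
  have hUcard : #U ≤ #{x : A // ∃ n : ℕ, x ^ p ^ n = 1} := by
    rw [← pTorSub_mk]
    refine mk_le_of_surjective (f := fun x : pTorSub p A =>
      (⟨QuotientGroup.mk' H x, Subgroup.mem_map.mpr ⟨x, x.2, rfl⟩⟩ : U)) ?_
    rintro ⟨u, hu⟩
    obtain ⟨x, hx, rfl⟩ := Subgroup.mem_map.mp hu
    exact ⟨⟨x, hx⟩, rfl⟩
  obtain ⟨s, hs⟩ := exists_indep_seq hp S U hS (lt_of_le_of_lt hUcard hτ) hℵ
  choose a ha using fun k => QuotientGroup.mk'_surjective H ((s k : A ⧸ H))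
  have hstar : ∀ (F : Finset ℕ) (n : ℕ → ℤ),
      (QuotientGroup.mk' H (∏ i ∈ F, a i ^ n i) ∈ U) → ∀ i ∈ F, (p : ℤ) ∣ n i := by
    intro F n hmem
    apply hs F n
    have hco : ((∏ i ∈ F, (s i) ^ (n i) : ↥S) : A ⧸ H) =
        QuotientGroup.mk' H (∏ i ∈ F, a i ^ n i) := by
      calc ((∏ i ∈ F, (s i) ^ (n i) : ↥S) : A ⧸ H)
          = ∏ i ∈ F, ((s i : A ⧸ H)) ^ (n i) := by
            rw [show ((∏ i ∈ F, (s i) ^ (n i) : ↥S) : A ⧸ H)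
                = S.subtype (∏ i ∈ F, (s i) ^ (n i)) from rfl, map_prod]
            exact Finset.prod_congr rfl fun j _ => by rw [map_zpow]; rfl
        _ = QuotientGroup.mk' H (∏ i ∈ F, a i ^ n i) := by
            rw [map_prod]
            exact Finset.prod_congr rfl fun j _ => by rw [map_zpow, ha j]
    rw [hco]
    exact hmem
  have hdesc : ∀ (k : ℕ) (F : Finset ℕ) (n : ℕ → ℤ),
      (∏ i ∈ F, a i ^ n i) = 1 → ∀ i ∈ F, (p : ℤ) ^ k ∣ n i := by
    intro k
    induction k with
    | zero => intro F n _ i _; simpa using one_dvd _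
    | succ k ih =>
      intro F n h1 i hiF
      set m : ℕ → ℤ := fun j => n j / (p : ℤ) ^ k with hmdef
      have hmn : ∀ j ∈ F, (p : ℤ) ^ k * m j = n j :=
        fun j hj => Int.mul_ediv_cancel' (ih F n h1 j hj)
      have hc : (∏ j ∈ F, a j ^ m j) ^ (p ^ k : ℕ) = 1 := by
        rw [← h1, ← Finset.prod_pow]
        refine Finset.prod_congr rfl fun j hj => ?_
        rw [← zpow_natCast (a j ^ m j), ← zpow_mul, mul_comm (m j)]
        rw [Nat.cast_pow]
        rw [hmn j hj]
      have hmem : QuotientGroup.mk' H (∏ j ∈ F, a j ^ m j) ∈ U :=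
        Subgroup.mem_map.mpr ⟨_, (pTorSub_mem _).mpr ⟨k, hc⟩, rfl⟩
      have hdvd := hstar F m hmem i hiF
      rw [← hmn i hiF, pow_succ]
      exact mul_dvd_mul_left _ hdvd
  have hindep : ∀ (F : Finset ℕ) (n : ℕ → ℤ),
      (∏ i ∈ F, a i ^ n i) = 1 → ∀ i ∈ F, n i = 0 := by
    intro F n h1 i hiF
    by_contra hne
    have habs := hdesc (n i).natAbs F n h1 i hiF
    have hle : (p : ℤ) ^ (n i).natAbs ≤ |n i| :=
      Int.le_of_dvd (abs_pos.mpr hne) ((dvd_abs _ _).mpr habs)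
    have hlt : ((n i).natAbs : ℤ) < (p : ℤ) ^ (n i).natAbs := by
      exact_mod_cast Nat.lt_pow_self (n := (n i).natAbs) hp.one_lt
    rw [Int.abs_eq_natAbs] at hle
    omega
  set N : Subgroup A := Subgroup.closure (Set.range fun i : ℕ => a i ^ (p ^ i)) with hNdef
  obtain ⟨e, he, hbd⟩ := WB N p hP
  have hmemN : a e ^ (p ^ e) ∈ N := Subgroup.subset_closure ⟨e, rfl⟩
  have hy : ((a e : A) : A ⧸ N) ^ (p ^ e) = 1 := by
    rw [← QuotientGroup.mk_pow]
    exact (QuotientGroup.eq_one_iff _).mpr hmemN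
  have hye : ((a e : A) : A ⧸ N) ^ e = 1 := hbd _ ⟨e, hy⟩
  have haeN : a e ^ e ∈ N := by
    rw [← QuotientGroup.eq_one_iff]
    rw [QuotientGroup.mk_pow]
    exact hye
  obtain ⟨F, c, hc⟩ := mem_closure_range_repr _ _ haeN
  set c' : ℕ → ℤ := fun i => if i ∈ F then c i else 0 with hc'def
  set F' : Finset ℕ := insert e F with hF'def
  set d : ℕ → ℤ := fun i => (p : ℤ) ^ i * c' i - (if i = e then (e : ℤ) else 0) with hddef
  have hX : ∏ i ∈ F', a i ^ ((p : ℤ) ^ i * c' i) = a e ^ (e : ℤ) := by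
    have h1 : ∏ i ∈ F', a i ^ ((p : ℤ) ^ i * c' i) = ∏ i ∈ F, a i ^ ((p : ℤ) ^ i * c' i) := by
      refine (Finset.prod_subset (Finset.subset_insert e F) ?_).symm
      intro j _ hj
      simp [hc'def, hj]
    rw [h1]
    have h2 : ∀ j ∈ F, a j ^ ((p : ℤ) ^ j * c' j) = (a j ^ (p ^ j : ℕ)) ^ c j := by
      intro j hj
      rw [← zpow_natCast (a j) (p ^ j), ← zpow_mul]
      simp [hc'def, hj]
    rw [Finset.prod_congr rfl h2, ← hc]
    rw [zpow_natCast]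
  have hY : ∏ i ∈ F', a i ^ (if i = e then (e : ℤ) else 0) = a e ^ (e : ℤ) := by
    have h1 : ∀ i ∈ F', a i ^ (if i = e then (e : ℤ) else 0)
        = (if i = e then a i ^ (e : ℤ) else 1) := by
      intro i _
      split <;> simp
    rw [Finset.prod_congr rfl h1, Finset.prod_ite_eq']
    simp [hF'def]
  have hprod : ∏ i ∈ F', a i ^ d i = 1 := by
    have : ∀ i ∈ F', a i ^ d i
        = a i ^ ((p : ℤ) ^ i * c' i) * (a i ^ (if i = e then (e : ℤ) else 0))⁻¹ := by
      intro i _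
      rw [hddef]
      rw [zpow_sub]
    rw [Finset.prod_congr rfl this, Finset.prod_mul_distrib, Finset.prod_inv_distrib, hX, hY,
      mul_inv_cancel]
  have hde := hindep F' d hprod e (Finset.mem_insert_self e F)
  have hdvd : (p : ℤ) ^ e ∣ (e : ℤ) := by
    refine ⟨c' e, ?_⟩
    have : (p : ℤ) ^ e * c' e - (e : ℤ) = 0 := by simpa [hddef] using hde
    omega
  have h1 : (p : ℤ) ^ e ≤ (e : ℤ) := Int.le_of_dvd (by exact_mod_cast he) hdvd
  have h2 : (e : ℤ) < (p : ℤ) ^ e := by exact_mod_cast Nat.lt_pow_self (n := e) hp.one_lt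
  omega

lemma coreL2 {A : Type u} [CommGroup A] {P : Set ℕ} {p : ℕ} (hp : p.Prime) (hP : p ∈ P)
    (WB : WeaklyBounded P A) (H : Subgroup A) :
    ∀ (m : ℕ) (S : Subgroup (A ⧸ H)), (∀ x ∈ S, x ^ p ^ m = 1) →
      #(S) ≤ #{x : A // ∃ n : ℕ, x ^ p ^ n = 1} ∨ #S < ℵ₀ := by
  intro m
  induction m with
  | zero =>
    intro S hS
    right
    haveI : Subsingleton ↥S := ⟨by
      rintro ⟨x, hx⟩ ⟨y, hy⟩
      have hx1 : x = 1 := by simpa using hS x hx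
      have hy1 : y = 1 := by simpa using hS y hy
      simp [hx1, hy1]⟩
    exact lt_aleph0_of_finite _
  | succ m ih =>
    intro S hS
    set φ : ↥S →* A ⧸ H := (powMonoidHom p).comp S.subtype with hφdef
    have hker : ∀ x ∈ φ.ker.map S.subtype, x ^ p = 1 := by
      rintro x hx
      obtain ⟨s, hs, rfl⟩ := Subgroup.mem_map.mp hx
      have h1 : φ s = 1 := MonoidHom.mem_ker.mp hs
      exact h1
    have hrange : ∀ x ∈ φ.range, x ^ p ^ m = 1 := by
      rintro x ⟨s, rfl⟩
      have h1 : (φ s : A ⧸ H) = (s : A ⧸ H) ^ p := rfl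
      rw [h1, ← pow_mul]
      have h2 : p * p ^ m = p ^ (m + 1) := by ring
      rw [h2]
      exact hS _ s.2
    have hkerS := coreL1 hp hP WB H (φ.ker.map S.subtype) hker
    have hrangeS := ih φ.range hrange
    have hcard : #S = #↥φ.range * #↥(φ.ker.map S.subtype) := by
      calc #↥S = #((↥S ⧸ φ.ker) × ↥φ.ker) :=
            mk_congr (Subgroup.groupEquivQuotientProdSubgroup (s := φ.ker))
        _ = #(↥S ⧸ φ.ker) * #↥φ.ker := by rw [mk_prod, lift_id, lift_id]
        _ = #↥φ.range * #↥(φ.ker.map S.subtype) := by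
            rw [mk_congr (QuotientGroup.quotientKerEquivRange φ).toEquiv,
              mk_congr (Subgroup.equivMapOfInjective φ.ker S.subtype
                S.subtype_injective).toEquiv]
    rw [hcard]
    exact pred_mul hrangeS hkerS

lemma coreL {A : Type u} [CommGroup A] {P : Set ℕ} {p : ℕ} (hp : p.Prime) (hP : p ∈ P)
    (WB : WeaklyBounded P A) (H : Subgroup A) :
    #{x : A ⧸ H // ∃ n : ℕ, x ^ p ^ n = 1} ≤ #{x : A // ∃ n : ℕ, x ^ p ^ n = 1} ∨
      #{x : A ⧸ H // ∃ n : ℕ, x ^ p ^ n = 1} < ℵ₀ := by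
  obtain ⟨e, he, hbd⟩ := WB H p hP
  have hexp : ∀ x ∈ pTorSub p (A ⧸ H), x ^ p ^ e = 1 := fun x hx =>
    ppow_exponent hp he ((pTorSub_mem x).mp hx) (hbd x ((pTorSub_mem x).mp hx))
  have hres := coreL2 hp hP WB H e (pTorSub p (A ⧸ H)) hexp
  rwa [pTorSub_mk] at hres


lemma exists_large {C : GroupClass.{u}} (hroot : IsRootClass C) (n : ℕ) :
    ∃ (G : Type u) (_ : Group G), C G ∧ (n : Cardinal.{u}) ≤ #G := by
  obtain ⟨G₀, i₀, hC₀, hnt₀⟩ := hroot.2.1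
  induction n with
  | zero => exact ⟨G₀, i₀, hC₀, by simp⟩
  | succ n ih =>
    obtain ⟨G, iG, hCG, hn⟩ := ih
    letI := iG; letI := i₀
    refine ⟨G → G₀, Pi.group, hroot.2.2.2.2 G₀ G hC₀ hCG, ?_⟩
    have h2 : (2 : Cardinal) ≤ #G₀ := by
      rw [Cardinal.two_le_iff]
      obtain ⟨x, y, hxy⟩ := hnt₀.exists_pair_ne
      exact ⟨x, y, hxy⟩
    have hlt : #G < #(G → G₀) := by
      rw [← Cardinal.power_def]
      exact lt_of_lt_of_le (Cardinal.cantor #G) (Cardinal.power_le_power_right h2)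
    have hlt2 : (n : Cardinal) < #(G → G₀) := lt_of_le_of_lt hn hlt
    have : ((n + 1 : ℕ) : Cardinal) = (n : Cardinal) + 1 := by push_cast; ring
    rw [this]
    exact (Cardinal.add_one_le_succ _).trans (Order.succ_le_of_lt hlt2)


end StatementThirteenAux

/-- Proposition 5.1(3): an abelian group `A` is `C`-bounded if and only if
it is weakly `C`-bounded and each primary `𝔓(C)`-component of `A` itself has finite exponent
and cardinality not exceeding the cardinality of some `C`-group. -/
theorem statement13 (C : GroupClass.{u}) (hroot : IsRootClass C) (hper : IsPeriodicClass C)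
    (A : Type u) [CommGroup A] :
    Bounded C A ↔
      (WeaklyBounded (classPrimes C) A ∧
        ∀ p ∈ classPrimes C,
          (∃ e : ℕ, 0 < e ∧ ∀ x : A, (∃ n : ℕ, x ^ p ^ n = 1) → x ^ e = 1) ∧
          ∃ (G : Type u) (_ : Group G), C G ∧
            Cardinal.mk {x : A // ∃ n : ℕ, x ^ p ^ n = 1} ≤ Cardinal.mk G) := by
  constructor
  · intro hB
    constructor
    · intro H _ q hq
      exact (hB H q hq).1
    · intro q hq
      obtain ⟨⟨e, he, hexp⟩, ⟨G, iG, hCG, hcard⟩⟩ := hB ⊥ q hq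
      constructor
      · refine ⟨e, he, ?_⟩
        intro x hx
        set φ := QuotientGroup.quotientBot (G := A) with hφ
        have h1 : ∃ n, (φ.symm x) ^ q ^ n = 1 := by
          obtain ⟨n, hn⟩ := hx
          exact ⟨n, by rw [← map_pow, hn, map_one]⟩
        have h2 := hexp (φ.symm x) h1
        have h3 := congrArg φ h2
        rwa [map_pow, map_one, MulEquiv.apply_symm_apply] at h3
      · refine ⟨G, iG, hCG, le_trans (le_of_eq ?_) hcard⟩
        refine Cardinal.mk_congr
          (Equiv.subtypeEquiv (QuotientGroup.quotientBot (G := A)).symm.toEquiv fun x => ?_)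
        constructor
        · rintro ⟨n, hn⟩
          exact ⟨n, by rw [show ((QuotientGroup.quotientBot (G := A)).symm.toEquiv x)
            = (QuotientGroup.quotientBot (G := A)).symm x from rfl, ← map_pow, hn, map_one]⟩
        · rintro ⟨n, hn⟩
          refine ⟨n, ?_⟩
          have h3 := congrArg (QuotientGroup.quotientBot (G := A)) hn
          rwa [show ((QuotientGroup.quotientBot (G := A)).symm.toEquiv x)
            = (QuotientGroup.quotientBot (G := A)).symm x from rfl,
            map_pow, map_one, MulEquiv.apply_symm_apply] at h3
  · rintro ⟨WB, hcomp⟩ H _ q hq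
    refine ⟨WB H q hq, ?_⟩
    obtain ⟨_, ⟨G, iG, hCG, hGcard⟩⟩ := hcomp q hq
    rcases coreL hq.1 hq WB H with hle | hfin
    · exact ⟨G, iG, hCG, hle.trans hGcard⟩
    · obtain ⟨n, hn⟩ := Cardinal.lt_aleph0.mp hfin
      obtain ⟨G', iG', hCG', hn'⟩ := exists_large hroot n
      exact ⟨G', iG', hCG', by rw [hn]; exact hn'⟩

end Paper
end

section
/- Let 𝒞 be a root class of groups consisting only of periodic groups. The classes of 𝒞-bounded abelian, weakly 𝒞-bounded abelian, 𝒞-bounded nilpotent, weakly 𝒞-bounded nilpotent, 𝒞-bounded solvable, and weakly 𝒞-bounded solvable groups are each closed under taking subgroups, quotient groups, and finite direct products. Moreover, if an abelian group X is a 𝒞-bounded (resp. weakly 𝒞-bounded) solvable group, then X is a 𝒞-bounded (resp. weakly 𝒞-bounded) abelian group. -/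
universe u

namespace Paper

/-- A class of groups is closed under taking subgroups, quotient groups, and
finite (binary) direct products. -/
def ClosedSQP (D : GroupClass.{u}) : Prop :=
  (∀ (G : Type u) [Group G], D G → ∀ H : Subgroup G, D ↥H) ∧
  (∀ (G : Type u) [Group G], D G → ∀ (N : Subgroup G) [N.Normal], D (G ⧸ N)) ∧
  (∀ (G H : Type u) [Group G] [Group H], D G → D H → D (G × H))

/-- The class of `C`-bounded abelian groups. -/
def BAclass (C : GroupClass.{u}) : GroupClass.{u} :=
  fun A _ => (∀ x y : A, x * y = y * x) ∧ Bounded C A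

/-- The class of weakly bounded abelian groups w.r.t. a set of primes `P`. -/
def wBAclass (P : Set ℕ) : GroupClass.{u} :=
  fun A _ => (∀ x y : A, x * y = y * x) ∧ WeaklyBounded P A

/-- The class of weakly bounded nilpotent groups w.r.t. a set of primes `P`. -/
def wBNclass (P : Set ℕ) : GroupClass.{u} := fun G _ => WeaklyBoundedNilpotent P G

/-- The class of `C`-bounded solvable groups. -/
def BSclass (C : GroupClass.{u}) : GroupClass.{u} := fun G _ => BoundedSolvable C G

/-- The class of weakly bounded solvable groups w.r.t. a set of primes `P`. -/
def wBSclass (P : Set ℕ) : GroupClass.{u} := fun G _ => WeaklyBoundedSolvable P G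

section Machinery

open Function QuotientGroup

/-- Pointwise weak boundedness of the `p`-component. -/
def PhiW (A : Type u) [Group A] (p : ℕ) : Prop :=
  ∃ e : ℕ, 0 < e ∧ ∀ x : A, (∃ n : ℕ, x ^ p ^ n = 1) → x ^ e = 1

/-- Pointwise boundedness of the `p`-component. -/
def PhiB (C : GroupClass.{u}) (A : Type u) [Group A] (p : ℕ) : Prop :=
  PhiW A p ∧ ∃ (G : Type u) (_ : Group G), C G ∧
    Cardinal.mk {x : A // ∃ n : ℕ, x ^ p ^ n = 1} ≤ Cardinal.mk G

/-- Quotient-wise property. -/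
def QProp (P : Set ℕ) (Φ : ∀ (A : Type u) [Group A], ℕ → Prop) (A : Type u) [Group A] : Prop :=
  ∀ (H : Subgroup A) [H.Normal], ∀ p ∈ P, Φ (A ⧸ H) p

theorem weaklyBounded_iff_qprop {P : Set ℕ} {A : Type u} [Group A] :
    WeaklyBounded P A ↔ QProp P PhiW A := Iff.rfl

theorem bounded_iff_qprop {C : GroupClass.{u}} {A : Type u} [Group A] :
    Bounded C A ↔ QProp (classPrimes C) (PhiB C) A := Iff.rfl

/-- `Φ` transfers along injective homomorphisms. -/
def InjTrans (Φ : ∀ (A : Type u) [Group A], ℕ → Prop) : Prop :=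
  ∀ (A B : Type u) [Group A] [Group B] (f : A →* B), Injective f → ∀ p, Φ B p → Φ A p

theorem phiW_inj : InjTrans PhiW := by
  intro A B _ _ f hf p ⟨e, he, hb⟩
  refine ⟨e, he, fun x ⟨n, hn⟩ => ?_⟩
  apply hf
  rw [map_pow, map_one]
  exact hb (f x) ⟨n, by rw [← map_pow, hn, map_one]⟩

theorem phiB_inj {C : GroupClass.{u}} : InjTrans (PhiB C) := by
  intro A B _ _ f hf p ⟨hw, G, _, hG, hc⟩
  refine ⟨phiW_inj A B f hf p hw, G, ‹_›, hG, le_trans ?_ hc⟩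
  refine Cardinal.mk_le_of_injective (f := fun x =>
    (⟨f x.1, x.2.imp fun n hn => by rw [← map_pow, hn, map_one]⟩ :
      {x : B // ∃ n : ℕ, x ^ p ^ n = 1})) ?_
  intro x y hxy
  exact Subtype.ext (hf (congrArg Subtype.val hxy))

theorem normal_of_comm {X : Type u} [Group X] (hc : ∀ x y : X, x * y = y * x)
    (N : Subgroup X) : N.Normal :=
  ⟨fun n hn g => by simpa [hc g n, mul_assoc] using hn⟩

theorem comm_quotient {X : Type u} [Group X] (hc : ∀ x y : X, x * y = y * x)
    (N : Subgroup X) [N.Normal] : ∀ a b : X ⧸ N, a * b = b * a := by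
  intro a b
  induction a using QuotientGroup.induction_on with
  | H x =>
  induction b using QuotientGroup.induction_on with
  | H y => rw [← QuotientGroup.mk_mul, ← QuotientGroup.mk_mul, hc]

theorem comm_subgroup {X : Type u} [Group X] (hc : ∀ x y : X, x * y = y * x)
    (S : Subgroup X) : ∀ a b : ↥S, a * b = b * a := fun a b => Subtype.ext (hc a.1 b.1)

section Generic

variable {P : Set ℕ} {Φ : ∀ (A : Type u) [Group A], ℕ → Prop} (hinj : InjTrans Φ)

include hinj

theorem qprop_surj {A B : Type u} [Group A] [Group B] (f : A →* B)
    (hf : Surjective f) (hA : QProp P Φ A) : QProp P Φ B := by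
  intro H _ p hp
  have hg : Surjective ((QuotientGroup.mk' H).comp f) := (mk'_surjective H).comp hf
  have e := QuotientGroup.quotientKerEquivOfSurjective _ hg
  exact hinj _ _ e.symm.toMonoidHom e.symm.injective p (hA _ p hp)

theorem qprop_equiv {A B : Type u} [Group A] [Group B] (e : A ≃* B)
    (hA : QProp P Φ A) : QProp P Φ B :=
  qprop_surj hinj e.toMonoidHom e.surjective hA

theorem qprop_inj_comm {A B : Type u} [Group A] [Group B]
    (hcomm : ∀ x y : B, x * y = y * x) (f : A →* B) (hf : Injective f)
    (hB : QProp P Φ B) : QProp P Φ A := by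
  intro H _ p hp
  haveI hN : (H.map f).Normal := normal_of_comm hcomm _
  have hle : H ≤ (H.map f).comap f := fun a ha => Subgroup.mem_comap.2 ⟨a, ha, rfl⟩
  have hφ : Injective (QuotientGroup.map H (H.map f) f hle) := by
    rw [injective_iff_map_eq_one]
    intro x
    induction x using QuotientGroup.induction_on with
    | H a =>
      rw [QuotientGroup.map_mk, QuotientGroup.eq_one_iff, QuotientGroup.eq_one_iff]
      rintro ⟨b, hb, hba⟩
      rwa [← hf hba]
  exact hinj _ _ _ hφ p (hB (H.map f) p hp)

omit hinj in
theorem qprop_of_subsingleton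
    (htriv : ∀ (A : Type u) [Group A], Subsingleton A → ∀ p ∈ P, Φ A p)
    {A : Type u} [Group A] (hA : Subsingleton A) : QProp P Φ A := by
  intro H _ p hp
  have : Subsingleton (A ⧸ H) :=
    ⟨fun a b => by
      induction a using QuotientGroup.induction_on with
      | H x =>
      induction b using QuotientGroup.induction_on with
      | H y => rw [Subsingleton.elim x y]⟩
  exact htriv _ this p hp

/-- Lift a quotient-wise property along a surjection defined on the numerator. -/
theorem qprop_lift {G Q : Type u} [Group G] [Group Q] {B : Subgroup G} [B.Normal]
    (g : G →* Q) (hker : ∀ x ∈ B, g x = 1) (hsurj : Surjective g)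
    (h : QProp P Φ (G ⧸ B)) : QProp P Φ Q := by
  refine qprop_surj hinj (QuotientGroup.lift B g (show B ≤ g.ker from fun x hx => MonoidHom.mem_ker.mpr (hker x hx))) ?_ h
  intro q
  obtain ⟨x, hx⟩ := hsurj q
  exact ⟨QuotientGroup.mk x, by simpa using hx⟩

/-- Pull back a quotient-wise property along a map into a commutative group with
prescribed kernel. -/
theorem qprop_colift {G Q : Type u} [Group G] [Group Q] {B : Subgroup G} [B.Normal]
    (hcomm : ∀ x y : Q, x * y = y * x)
    (g : G →* Q) (hker : ∀ x ∈ B, g x = 1) (hker' : ∀ x, g x = 1 → x ∈ B)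
    (h : QProp P Φ Q) : QProp P Φ (G ⧸ B) := by
  refine qprop_inj_comm hinj hcomm (QuotientGroup.lift B g (show B ≤ g.ker from fun x hx => MonoidHom.mem_ker.mpr (hker x hx))) ?_ h
  rw [injective_iff_map_eq_one]
  intro x
  induction x using QuotientGroup.induction_on with
  | H a =>
    rw [QuotientGroup.lift_mk, QuotientGroup.eq_one_iff]
    exact hker' a

/-- `Φ` is stable under central (abelian) extensions. -/
def ExtTrans (P : Set ℕ) (Φ : ∀ (A : Type u) [Group A], ℕ → Prop) : Prop :=
  ∀ (X : Type u) [Group X] (_ : ∀ x y : X, x * y = y * x) (N : Subgroup X) [N.Normal],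
    ∀ p ∈ P, Φ ↥N p → Φ (X ⧸ N) p → Φ X p

theorem qprop_ext (hext : ExtTrans P Φ) {X : Type u} [Group X]
    (hc : ∀ x y : X, x * y = y * x) (N : Subgroup X) [N.Normal]
    (hN : QProp P Φ ↥N) (hQ : QProp P Φ (X ⧸ N)) : QProp P Φ X := by
  intro K _ p hp
  haveI : Subgroup.Normal (N.map (QuotientGroup.mk' K)) :=
    normal_of_comm (comm_quotient hc K) _
  set N' := N.map (QuotientGroup.mk' K) with hN'
  have hsur : Surjective ((QuotientGroup.mk' K).subgroupMap N) :=
    MonoidHom.subgroupMap_surjective _ N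
  have h1 : Φ ↥N' p := by
    have e := QuotientGroup.quotientKerEquivOfSurjective _ hsur
    exact hinj _ _ e.symm.toMonoidHom e.symm.injective p (hN _ p hp)
  have hker : N ≤ ((QuotientGroup.mk' N').comp (QuotientGroup.mk' K)).ker := by
    intro x hx
    have : ((QuotientGroup.mk' K) x : X ⧸ K) ∈ N' := Subgroup.mem_map_of_mem _ hx
    simpa [MonoidHom.mem_ker, QuotientGroup.eq_one_iff] using this
  set θ := QuotientGroup.lift N ((QuotientGroup.mk' N').comp (QuotientGroup.mk' K)) hker
    with hθ
  have hθsur : Surjective θ := by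
    intro q
    induction q using QuotientGroup.induction_on with
    | H y =>
      induction y using QuotientGroup.induction_on with
      | H x => exact ⟨QuotientGroup.mk x, rfl⟩
  have h2 : Φ ((X ⧸ K) ⧸ N') p := by
    have e := QuotientGroup.quotientKerEquivOfSurjective θ hθsur
    exact hinj _ _ e.symm.toMonoidHom e.symm.injective p (hQ θ.ker p hp)
  exact hext (X ⧸ K) (comm_quotient hc K) N' p hp h1 h2

theorem qprop_series (hext : ExtTrans P Φ)
    (htriv : ∀ (A : Type u) [Group A], Subsingleton A → ∀ p ∈ P, Φ A p)
    {X : Type u} [Group X] (hc : ∀ x y : X, x * y = y * x)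
    (n : ℕ) (H : ℕ → Subgroup X) (h0 : H 0 = ⊥) (htop : H n = ⊤)
    (hmono : ∀ i, H i ≤ H (i + 1))
    (hfac : ∀ i, ∀ hN : ((H i).subgroupOf (H (i + 1))).Normal,
      letI := hN; QProp P Φ (↥(H (i + 1)) ⧸ (H i).subgroupOf (H (i + 1)))) :
    QProp P Φ X := by
  have key : ∀ i, QProp P Φ ↥(H i) := by
    intro i
    induction i with
    | zero =>
      refine qprop_of_subsingleton htriv ?_
      rw [h0]
      infer_instance
    | succ i ih =>
      have hcomm' : ∀ x y : ↥(H (i + 1)), x * y = y * x := comm_subgroup hc _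
      haveI hNn : ((H i).subgroupOf (H (i + 1))).Normal := normal_of_comm hcomm' _
      have hNq : QProp P Φ ↥((H i).subgroupOf (H (i + 1))) :=
        qprop_surj hinj (Subgroup.subgroupOfEquivOfLe (hmono i)).symm.toMonoidHom
          (Subgroup.subgroupOfEquivOfLe (hmono i)).symm.surjective ih
      exact qprop_ext hinj hext hcomm' _ hNq (hfac i hNn)
  have hn := key n
  rw [htop] at hn
  exact qprop_equiv hinj Subgroup.topEquiv hn

end Generic

theorem phiW_ext {P : Set ℕ} : ExtTrans P PhiW := by
  rintro X _ hc N _ p hp ⟨e1, he1, h1⟩ ⟨e2, he2, h2⟩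
  refine ⟨e2 * e1, Nat.mul_pos he2 he1, ?_⟩
  rintro x ⟨n, hn⟩
  have hq : ((x : X ⧸ N)) ^ e2 = 1 :=
    h2 _ ⟨n, by rw [← QuotientGroup.mk_pow, hn]; rfl⟩
  have hxN : x ^ e2 ∈ N := by
    rwa [← QuotientGroup.mk_pow, QuotientGroup.eq_one_iff] at hq
  have ha : (⟨x ^ e2, hxN⟩ : ↥N) ^ p ^ n = 1 := by
    have hx : (x ^ e2) ^ p ^ n = 1 := by
      rw [← pow_mul, mul_comm, pow_mul, hn, one_pow]
    exact Subtype.ext (by simpa using hx)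
  have := congrArg Subtype.val (h1 _ ⟨n, ha⟩)
  simpa [pow_mul] using this

theorem phiW_triv {P : Set ℕ} :
    ∀ (A : Type u) [Group A], Subsingleton A → ∀ p ∈ P, PhiW A p :=
  fun _ _ _ _ _ => ⟨1, one_pos, fun _ _ => Subsingleton.elim _ _⟩

theorem class_prod {C : GroupClass.{u}} (hroot : IsRootClass C) {G H : Type u}
    [Group G] [Group H] (hG : C G) (hH : C H) : C (G × H) := by
  obtain ⟨hiso, -, -, hext, -⟩ := hroot
  have hsur : Surjective (MonoidHom.fst G H) := fun g => ⟨(g, 1), rfl⟩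
  refine hext (G × H) (MonoidHom.fst G H).ker ?_ ?_
  · refine hiso H _ ?_ hH
    exact
      { toFun := fun h => ⟨(1, h), rfl⟩
        invFun := fun n => n.1.2
        left_inv := fun h => rfl
        right_inv := fun n => Subtype.ext (Prod.ext (show (1 : G) = n.1.1 from (MonoidHom.mem_ker.mp n.2).symm) rfl)
        map_mul' := fun a b => Subtype.ext (Prod.ext (one_mul (1 : G)).symm rfl) }
  · exact hiso G _ (QuotientGroup.quotientKerEquivOfSurjective _ hsur).symm hG

theorem phiB_triv {C : GroupClass.{u}} (hroot : IsRootClass C) :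
    ∀ (A : Type u) [Group A], Subsingleton A → ∀ p ∈ classPrimes C, PhiB C A p := by
  intro A _ hA p hp
  obtain ⟨-, ⟨G, gG, hG, hnt⟩, -⟩ := hroot
  refine ⟨phiW_triv A hA p hp, G, gG, hG, ?_⟩
  calc Cardinal.mk {x : A // ∃ n : ℕ, x ^ p ^ n = 1} ≤ 1 :=
        Cardinal.le_one_iff_subsingleton.mpr inferInstance
    _ ≤ Cardinal.mk G := Cardinal.one_le_iff_ne_zero.mpr (Cardinal.mk_ne_zero _)

theorem phiB_ext {C : GroupClass.{u}} (hroot : IsRootClass C) :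
    ExtTrans (classPrimes C) (PhiB C) := by
  rintro X _ hc N _ p hp ⟨hw1, G1, gG1, hG1, hc1⟩ ⟨hw2, G2, gG2, hG2, hc2⟩
  refine ⟨phiW_ext X hc N p hp hw1 hw2, ?_⟩
  classical
  obtain ⟨j1⟩ := (Cardinal.le_def _ _).mp hc1
  obtain ⟨j2⟩ := (Cardinal.le_def _ _).mp hc2
  refine ⟨G2 × G1, inferInstance, class_prod ⟨hroot.1, hroot.2.1, hroot.2.2.1,
    hroot.2.2.2.1, hroot.2.2.2.2⟩ hG2 hG1, ?_⟩
  set T := {x : X // ∃ n : ℕ, x ^ p ^ n = 1} with hT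
  let Fq : T → {x : X ⧸ N // ∃ n : ℕ, x ^ p ^ n = 1} := fun x =>
    ⟨QuotientGroup.mk x.1, x.2.imp fun n hn => by rw [← QuotientGroup.mk_pow, hn]; rfl⟩
  let s : {x : X ⧸ N // ∃ n : ℕ, x ^ p ^ n = 1} → T := fun c =>
    if h : ∃ x : T, Fq x = c then h.choose else ⟨1, 0, one_pow _⟩
  have hs : ∀ x : T, Fq (s (Fq x)) = Fq x := by
    intro x
    have h : ∃ y : T, Fq y = Fq x := ⟨x, rfl⟩
    simp only [s, dif_pos h]
    exact h.choose_spec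
  have memN : ∀ x : T, x.1 * (s (Fq x)).1⁻¹ ∈ N := by
    intro x
    have hmk : (QuotientGroup.mk (s (Fq x)).1 : X ⧸ N) = QuotientGroup.mk x.1 :=
      congrArg Subtype.val (hs x)
    have h' := QuotientGroup.eq.mp hmk
    rwa [hc] at h'
  have pord : ∀ x : T, ∃ n : ℕ, (x.1 * (s (Fq x)).1⁻¹) ^ p ^ n = 1 := by
    intro x
    obtain ⟨a, ha⟩ := x.2
    obtain ⟨b, hb⟩ := (s (Fq x)).2
    refine ⟨a + b, ?_⟩
    have hcm : Commute x.1 ((s (Fq x)).1⁻¹) := hc _ _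
    have h1x : x.1 ^ p ^ (a + b) = 1 := by rw [pow_add, pow_mul, ha, one_pow]
    have h2x : ((s (Fq x)).1)⁻¹ ^ p ^ (a + b) = 1 := by
      rw [inv_pow, pow_add, mul_comm (p ^ a), pow_mul, hb, one_pow, inv_one]
    rw [hcm.mul_pow, h1x, h2x, one_mul]
  let g : T → G2 × G1 := fun x =>
    (j2 (Fq x), j1 ⟨⟨_, memN x⟩, (pord x).imp fun n hn => Subtype.ext (by simpa using hn)⟩)
  have hg : Injective g := by
    intro x y hxy
    have h2' : Fq x = Fq y := j2.injective (congrArg Prod.fst hxy)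
    have h1' := j1.injective (congrArg Prod.snd hxy)
    have hval : x.1 * (s (Fq x)).1⁻¹ = y.1 * (s (Fq y)).1⁻¹ :=
      congrArg Subtype.val (congrArg Subtype.val h1')
    rw [h2'] at hval
    exact Subtype.ext (mul_right_cancel hval)
  exact Cardinal.mk_le_of_injective hg

section Factors

variable {P : Set ℕ} {Φ : ∀ (A : Type u) [Group A], ℕ → Prop}

theorem normal_subgroupOf_of_conj {X : Type u} [Group X] {B A : Subgroup X}
    (h : ∀ g ∈ A, ∀ x ∈ B, g * x * g⁻¹ ∈ B) : (B.subgroupOf A).Normal := by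
  refine ⟨fun n hn g => ?_⟩
  rw [Subgroup.mem_subgroupOf] at hn ⊢
  exact h g.1 g.2 n.1 hn

theorem conj_of_cent {X : Type u} [Group X] {B A : Subgroup X}
    (hcent : ∀ x ∈ A, ∀ g : X, x * g * x⁻¹ * g⁻¹ ∈ B) :
    ∀ g ∈ A, ∀ x ∈ B, g * x * g⁻¹ ∈ B := by
  intro g hg x hx
  have h2 := mul_mem (hcent g hg x) hx
  simpa [mul_assoc] using h2

theorem comm_of_cent {X : Type u} [Group X] {B A : Subgroup X}
    (hcent : ∀ x ∈ A, ∀ g : X, x * g * x⁻¹ * g⁻¹ ∈ B) :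
    ∀ x ∈ A, ∀ y ∈ A, x * y * x⁻¹ * y⁻¹ ∈ B := fun x hx y _ => hcent x hx y

theorem comm_factor {X : Type u} [Group X] {B A : Subgroup X}
    (hcomm : ∀ x ∈ A, ∀ y ∈ A, x * y * x⁻¹ * y⁻¹ ∈ B) [(B.subgroupOf A).Normal] :
    ∀ u v : ↥A ⧸ B.subgroupOf A, u * v = v * u := by
  intro u v
  induction u using QuotientGroup.induction_on with
  | H x =>
  induction v using QuotientGroup.induction_on with
  | H y =>
    rw [← QuotientGroup.mk_mul, ← QuotientGroup.mk_mul]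
    refine QuotientGroup.eq.mpr ?_
    rw [Subgroup.mem_subgroupOf]
    have := hcomm y.1⁻¹ (A.inv_mem y.2) x.1⁻¹ (A.inv_mem x.2)
    simpa [mul_assoc, mul_inv_rev] using this

variable (hinj : InjTrans Φ)
include hinj

/-- Factor transfer to the series restricted to a subgroup. -/
theorem facq_restrict {X : Type u} [Group X] (S : Subgroup X) {B A : Subgroup X}
    (hcomm : ∀ x ∈ A, ∀ y ∈ A, x * y * x⁻¹ * y⁻¹ ∈ B)
    [(B.subgroupOf A).Normal]
    (h : QProp P Φ (↥A ⧸ B.subgroupOf A))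
    [((B.subgroupOf S).subgroupOf (A.subgroupOf S)).Normal] :
    QProp P Φ (↥(A.subgroupOf S) ⧸ (B.subgroupOf S).subgroupOf (A.subgroupOf S)) := by
  let f : ↥(A.subgroupOf S) →* ↥A :=
    MonoidHom.mk' (fun x => ⟨x.1.1, Subgroup.mem_subgroupOf.mp x.2⟩) (fun a b => rfl)
  refine qprop_colift hinj (comm_factor hcomm)
    ((QuotientGroup.mk' (B.subgroupOf A)).comp f) ?_ ?_ h
  · intro x hx
    have hxB : (x.1 : X) ∈ B := Subgroup.mem_subgroupOf.mp (Subgroup.mem_subgroupOf.mp hx)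
    simp only [MonoidHom.comp_apply, QuotientGroup.mk'_apply, QuotientGroup.eq_one_iff]
    exact Subgroup.mem_subgroupOf.mpr hxB
  · intro x hx
    simp only [MonoidHom.comp_apply, QuotientGroup.mk'_apply, QuotientGroup.eq_one_iff] at hx
    have hxB : (x.1 : X) ∈ B := Subgroup.mem_subgroupOf.mp hx
    exact Subgroup.mem_subgroupOf.mpr (Subgroup.mem_subgroupOf.mpr hxB)

/-- Factor transfer to the image series under a homomorphism. -/
theorem facq_map {X Y : Type u} [Group X] [Group Y] (π : X →* Y) {B A : Subgroup X}
    [(B.subgroupOf A).Normal]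
    (h : QProp P Φ (↥A ⧸ B.subgroupOf A))
    [((B.map π).subgroupOf (A.map π)).Normal] :
    QProp P Φ (↥(A.map π) ⧸ (B.map π).subgroupOf (A.map π)) := by
  refine qprop_lift hinj ((QuotientGroup.mk' _).comp (π.subgroupMap A)) ?_ ?_ h
  · intro x hx
    simp only [MonoidHom.comp_apply, QuotientGroup.mk'_apply, QuotientGroup.eq_one_iff]
    exact Subgroup.mem_subgroupOf.mpr
      (Subgroup.mem_map_of_mem (K := B) π (Subgroup.mem_subgroupOf.mp hx))
  · exact (QuotientGroup.mk'_surjective _).comp (MonoidHom.subgroupMap_surjective π A)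

end Factors

/-- Generic nilpotent-type series with quotient-wise factor property. -/
def GNilp (P : Set ℕ) (Φ : ∀ (A : Type u) [Group A], ℕ → Prop)
    (X : Type u) [Group X] : Prop :=
  ∃ (n : ℕ) (H : ℕ → Subgroup X),
    H 0 = ⊥ ∧ H n = ⊤ ∧ (∀ i, H i ≤ H (i + 1)) ∧
    (∀ i, ∀ x ∈ H (i + 1), ∀ g : X, x * g * x⁻¹ * g⁻¹ ∈ H i) ∧
    (∀ i, ∀ hN : ((H i).subgroupOf (H (i + 1))).Normal,
      letI := hN; QProp P Φ (↥(H (i + 1)) ⧸ (H i).subgroupOf (H (i + 1))))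

/-- Generic solvable-type series with quotient-wise factor property. -/
def GSolv (P : Set ℕ) (Φ : ∀ (A : Type u) [Group A], ℕ → Prop)
    (X : Type u) [Group X] : Prop :=
  ∃ (n : ℕ) (H : ℕ → Subgroup X),
    H 0 = ⊥ ∧ H n = ⊤ ∧ (∀ i, H i ≤ H (i + 1)) ∧
    (∀ i, ∀ g ∈ H (i + 1), ∀ x ∈ H i, g * x * g⁻¹ ∈ H i) ∧
    (∀ i, ∀ x ∈ H (i + 1), ∀ y ∈ H (i + 1), x * y * x⁻¹ * y⁻¹ ∈ H i) ∧
    (∀ i, ∀ hN : ((H i).subgroupOf (H (i + 1))).Normal,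
      letI := hN; QProp P Φ (↥(H (i + 1)) ⧸ (H i).subgroupOf (H (i + 1))))

theorem weaklyBoundedNilpotent_iff {P : Set ℕ} {X : Type u} [Group X] :
    WeaklyBoundedNilpotent P X ↔ GNilp P PhiW X := Iff.rfl

theorem boundedNilpotent_iff {C : GroupClass.{u}} {X : Type u} [Group X] :
    BoundedNilpotent C X ↔ GNilp (classPrimes C) (PhiB C) X := Iff.rfl

theorem weaklyBoundedSolvable_iff {P : Set ℕ} {X : Type u} [Group X] :
    WeaklyBoundedSolvable P X ↔ GSolv P PhiW X := Iff.rfl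

theorem boundedSolvable_iff {C : GroupClass.{u}} {X : Type u} [Group X] :
    BoundedSolvable C X ↔ GSolv (classPrimes C) (PhiB C) X := Iff.rfl

section Series

variable {P : Set ℕ} {Φ : ∀ (A : Type u) [Group A], ℕ → Prop} (hinj : InjTrans Φ)
include hinj

theorem gnilp_subgroup {X : Type u} [Group X] (h : GNilp P Φ X) (S : Subgroup X) :
    GNilp P Φ ↥S := by
  obtain ⟨n, H, h0, htop, hmono, hcent, hfac⟩ := h
  refine ⟨n, fun i => (H i).subgroupOf S, ?_, ?_, ?_, ?_, ?_⟩
  · simp only [h0]; exact Subgroup.bot_subgroupOf S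
  · simp only [htop]; exact Subgroup.top_subgroupOf S
  · intro i x hx
    exact hmono i hx
  · intro i x hx g
    simp only [Subgroup.mem_subgroupOf] at hx ⊢
    exact hcent i x.1 hx g.1
  · intro i hN'
    haveI := hN'
    haveI hO : ((H i).subgroupOf (H (i + 1))).Normal :=
      normal_subgroupOf_of_conj (conj_of_cent (hcent i))
    exact facq_restrict hinj S (comm_of_cent (hcent i)) (hfac i hO)

theorem gnilp_surj {X Y : Type u} [Group X] [Group Y] (π : X →* Y) (hπ : Surjective π)
    (h : GNilp P Φ X) : GNilp P Φ Y := by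
  obtain ⟨n, H, h0, htop, hmono, hcent, hfac⟩ := h
  refine ⟨n, fun i => (H i).map π, ?_, ?_, ?_, ?_, ?_⟩
  · simp only [h0]; exact Subgroup.map_bot π
  · simp only [htop]; exact Subgroup.map_top_of_surjective π hπ
  · intro i; exact Subgroup.map_mono (hmono i)
  · rintro i x ⟨a, ha, rfl⟩ g
    obtain ⟨b, rfl⟩ := hπ g
    have := Subgroup.mem_map_of_mem π (hcent i a ha b)
    simpa [map_mul, map_inv] using this
  · intro i hN'
    haveI := hN'
    haveI hO : ((H i).subgroupOf (H (i + 1))).Normal :=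
      normal_subgroupOf_of_conj (conj_of_cent (hcent i))
    exact facq_map hinj π (hfac i hO)

theorem gnilp_prod {X Y : Type u} [Group X] [Group Y]
    (hX : GNilp P Φ X) (hY : GNilp P Φ Y) : GNilp P Φ (X × Y) := by
  obtain ⟨n, H, h0, htop, hmono, hcent, hfac⟩ := hX
  obtain ⟨m, K, k0, ktop, kmono, kcent, kfac⟩ := hY
  have hHm : Monotone H := monotone_nat_of_le_succ hmono
  have hKm : Monotone K := monotone_nat_of_le_succ kmono
  refine ⟨n + m, fun i => (H (min i n)).prod (K (i - n)), ?_, ?_, ?_, ?_, ?_⟩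
  · simp only [min_eq_left (Nat.zero_le n), Nat.zero_sub, h0, k0]
    exact Subgroup.bot_prod_bot
  · simp only [min_eq_right (Nat.le_add_right n m), Nat.add_sub_cancel_left, htop, ktop]
    exact Subgroup.top_prod_top
  · intro i
    exact Subgroup.prod_mono (hHm (min_le_min (Nat.le_succ i) le_rfl))
      (hKm (Nat.sub_le_sub_right (Nat.le_succ i) n))
  · intro i x hx g
    simp only [Subgroup.mem_prod] at hx ⊢
    constructor
    · rcases le_or_gt n i with hn | hn
      · rw [min_eq_right hn, htop]; exact Subgroup.mem_top _
      · have h1 : min (i + 1) n = i + 1 := min_eq_left hn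
        have h2 : min i n = i := min_eq_left hn.le
        rw [h2]
        rw [h1] at hx
        exact hcent i x.1 hx.1 g.1
    · rcases le_or_gt n i with hn | hn
      · have h1 : i + 1 - n = (i - n) + 1 := Nat.succ_sub hn
        rw [h1] at hx
        exact kcent (i - n) x.2 hx.2 g.2
      · have h1 : i + 1 - n = 0 := Nat.sub_eq_zero_of_le hn
        have h2 : i - n = 0 := Nat.sub_eq_zero_of_le hn.le
        rw [h1, k0] at hx
        have hx2 : x.2 = 1 := Subgroup.mem_bot.mp hx.2
        rw [h2, k0, Subgroup.mem_bot]
        simp [hx2]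
  · intro i hN'
    haveI := hN'
    rcases le_or_gt n i with hn | hn
    · have e2 : min i n = n := min_eq_right hn
      have e3 : i + 1 - n = (i - n) + 1 := Nat.succ_sub hn
      haveI hO : ((K (i - n)).subgroupOf (K (i - n + 1))).Normal :=
        normal_subgroupOf_of_conj (conj_of_cent (kcent (i - n)))
      refine qprop_lift hinj ((QuotientGroup.mk' _).comp (MonoidHom.mk'
        (fun k : ↥(K (i - n + 1)) =>
          (⟨((1 : X), (k.1 : Y)), Subgroup.mem_prod.mpr
            ⟨one_mem _, (by rw [e3]; exact k.2)⟩⟩ :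
            ↥((H (min (i + 1) n)).prod (K (i + 1 - n)))))
        (fun a b => Subtype.ext (Prod.ext (one_mul (1 : X)).symm rfl))))
        ?_ ?_ (kfac (i - n) hO)
      · intro x hx
        simp only [MonoidHom.comp_apply, QuotientGroup.mk'_apply, QuotientGroup.eq_one_iff]
        refine Subgroup.mem_subgroupOf.mpr (Subgroup.mem_prod.mpr ⟨one_mem _, ?_⟩)
        exact Subgroup.mem_subgroupOf.mp hx
      · intro q
        induction q using QuotientGroup.induction_on with
        | H y =>
          have hy2 : (y.1.2 : Y) ∈ K (i - n + 1) := by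
            have := (Subgroup.mem_prod.mp y.2).2; rwa [e3] at this
          refine ⟨⟨y.1.2, hy2⟩, ?_⟩
          simp only [MonoidHom.comp_apply, QuotientGroup.mk'_apply]
          refine QuotientGroup.eq.mpr ?_
          refine Subgroup.mem_subgroupOf.mpr (Subgroup.mem_prod.mpr ⟨?_, ?_⟩)
          · rw [e2, htop]; exact Subgroup.mem_top _
          · simpa using one_mem (K (i - n))
    · have e1 : min (i + 1) n = i + 1 := min_eq_left hn
      have e2 : min i n = i := min_eq_left hn.le
      have e3 : i + 1 - n = 0 := Nat.sub_eq_zero_of_le hn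
      haveI hO : ((H i).subgroupOf (H (i + 1))).Normal :=
        normal_subgroupOf_of_conj (conj_of_cent (hcent i))
      refine qprop_lift hinj ((QuotientGroup.mk' _).comp (MonoidHom.mk'
        (fun a : ↥(H (i + 1)) =>
          (⟨((a.1 : X), (1 : Y)), Subgroup.mem_prod.mpr
            ⟨(by rw [e1]; exact a.2), one_mem _⟩⟩ :
            ↥((H (min (i + 1) n)).prod (K (i + 1 - n)))))
        (fun a b => Subtype.ext (Prod.ext rfl (one_mul (1 : Y)).symm))))
        ?_ ?_ (hfac i hO)
      · intro x hx
        simp only [MonoidHom.comp_apply, QuotientGroup.mk'_apply, QuotientGroup.eq_one_iff]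
        refine Subgroup.mem_subgroupOf.mpr (Subgroup.mem_prod.mpr ⟨?_, one_mem _⟩)
        rw [e2]; exact Subgroup.mem_subgroupOf.mp hx
      · intro q
        induction q using QuotientGroup.induction_on with
        | H y =>
          have hy1 : (y.1.1 : X) ∈ H (i + 1) := by
            have := (Subgroup.mem_prod.mp y.2).1; rwa [e1] at this
          have hy2 : (y.1.2 : Y) = 1 := by
            have := (Subgroup.mem_prod.mp y.2).2
            rw [e3, k0] at this
            exact Subgroup.mem_bot.mp this
          refine ⟨⟨y.1.1, hy1⟩, ?_⟩
          simp only [MonoidHom.comp_apply, QuotientGroup.mk'_apply]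
          refine QuotientGroup.eq.mpr ?_
          refine Subgroup.mem_subgroupOf.mpr (Subgroup.mem_prod.mpr ⟨?_, ?_⟩)
          · rw [e2]; simpa using one_mem (H i)
          · simpa [hy2] using one_mem (K (i - n))

theorem gsolv_subgroup {X : Type u} [Group X] (h : GSolv P Φ X) (S : Subgroup X) :
    GSolv P Φ ↥S := by
  obtain ⟨n, H, h0, htop, hmono, hconj, hcomm, hfac⟩ := h
  refine ⟨n, fun i => (H i).subgroupOf S, ?_, ?_, ?_, ?_, ?_, ?_⟩
  · simp only [h0]; exact Subgroup.bot_subgroupOf S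
  · simp only [htop]; exact Subgroup.top_subgroupOf S
  · intro i x hx
    exact hmono i hx
  · intro i g hg x hx
    simp only [Subgroup.mem_subgroupOf] at hg hx ⊢
    exact hconj i g.1 hg x.1 hx
  · intro i x hx y hy
    simp only [Subgroup.mem_subgroupOf] at hx hy ⊢
    exact hcomm i x.1 hx y.1 hy
  · intro i hN'
    haveI := hN'
    haveI hO : ((H i).subgroupOf (H (i + 1))).Normal :=
      normal_subgroupOf_of_conj (hconj i)
    exact facq_restrict hinj S (hcomm i) (hfac i hO)

theorem gsolv_surj {X Y : Type u} [Group X] [Group Y] (π : X →* Y) (hπ : Surjective π)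
    (h : GSolv P Φ X) : GSolv P Φ Y := by
  obtain ⟨n, H, h0, htop, hmono, hconj, hcomm, hfac⟩ := h
  refine ⟨n, fun i => (H i).map π, ?_, ?_, ?_, ?_, ?_, ?_⟩
  · simp only [h0]; exact Subgroup.map_bot π
  · simp only [htop]; exact Subgroup.map_top_of_surjective π hπ
  · intro i; exact Subgroup.map_mono (hmono i)
  · rintro i g ⟨a, ha, rfl⟩ x ⟨b, hb, rfl⟩
    have := Subgroup.mem_map_of_mem π (hconj i a ha b hb)
    simpa [map_mul, map_inv] using this
  · rintro i x ⟨a, ha, rfl⟩ y ⟨b, hb, rfl⟩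
    have := Subgroup.mem_map_of_mem π (hcomm i a ha b hb)
    simpa [map_mul, map_inv] using this
  · intro i hN'
    haveI := hN'
    haveI hO : ((H i).subgroupOf (H (i + 1))).Normal :=
      normal_subgroupOf_of_conj (hconj i)
    exact facq_map hinj π (hfac i hO)

theorem gsolv_prod {X Y : Type u} [Group X] [Group Y]
    (hX : GSolv P Φ X) (hY : GSolv P Φ Y) : GSolv P Φ (X × Y) := by
  obtain ⟨n, H, h0, htop, hmono, hconj, hcomm, hfac⟩ := hX
  obtain ⟨m, K, k0, ktop, kmono, kconj, kcomm, kfac⟩ := hY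
  have hHm : Monotone H := monotone_nat_of_le_succ hmono
  have hKm : Monotone K := monotone_nat_of_le_succ kmono
  refine ⟨n + m, fun i => (H (min i n)).prod (K (i - n)), ?_, ?_, ?_, ?_, ?_, ?_⟩
  · simp only [min_eq_left (Nat.zero_le n), Nat.zero_sub, h0, k0]
    exact Subgroup.bot_prod_bot
  · simp only [min_eq_right (Nat.le_add_right n m), Nat.add_sub_cancel_left, htop, ktop]
    exact Subgroup.top_prod_top
  · intro i
    exact Subgroup.prod_mono (hHm (min_le_min (Nat.le_succ i) le_rfl))
      (hKm (Nat.sub_le_sub_right (Nat.le_succ i) n))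
  · intro i g hg x hx
    simp only [Subgroup.mem_prod] at hg hx ⊢
    constructor
    · rcases le_or_gt n i with hn | hn
      · rw [min_eq_right hn, htop]; exact Subgroup.mem_top _
      · have h1 : min (i + 1) n = i + 1 := min_eq_left hn
        have h2 : min i n = i := min_eq_left hn.le
        rw [h2] at hx ⊢
        rw [h1] at hg
        exact hconj i g.1 hg.1 x.1 hx.1
    · rcases le_or_gt n i with hn | hn
      · have h1 : i + 1 - n = (i - n) + 1 := Nat.succ_sub hn
        rw [h1] at hg
        exact kconj (i - n) g.2 hg.2 x.2 hx.2
      · have h2 : i - n = 0 := Nat.sub_eq_zero_of_le hn.le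
        rw [h2, k0] at hx ⊢
        have hx2 : x.2 = 1 := Subgroup.mem_bot.mp hx.2
        rw [Subgroup.mem_bot]
        simp [hx2]
  · intro i x hx y hy
    simp only [Subgroup.mem_prod] at hx hy ⊢
    constructor
    · rcases le_or_gt n i with hn | hn
      · rw [min_eq_right hn, htop]; exact Subgroup.mem_top _
      · have h1 : min (i + 1) n = i + 1 := min_eq_left hn
        have h2 : min i n = i := min_eq_left hn.le
        rw [h2]
        rw [h1] at hx hy
        exact hcomm i x.1 hx.1 y.1 hy.1
    · rcases le_or_gt n i with hn | hn
      · have h1 : i + 1 - n = (i - n) + 1 := Nat.succ_sub hn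
        rw [h1] at hx hy
        exact kcomm (i - n) x.2 hx.2 y.2 hy.2
      · have h1 : i + 1 - n = 0 := Nat.sub_eq_zero_of_le hn
        have h2 : i - n = 0 := Nat.sub_eq_zero_of_le hn.le
        rw [h1, k0] at hx hy
        have hx2 : x.2 = 1 := Subgroup.mem_bot.mp hx.2
        have hy2 : y.2 = 1 := Subgroup.mem_bot.mp hy.2
        rw [h2, k0, Subgroup.mem_bot]
        simp [hx2, hy2]
  · intro i hN'
    haveI := hN'
    rcases le_or_gt n i with hn | hn
    · have e2 : min i n = n := min_eq_right hn
      have e3 : i + 1 - n = (i - n) + 1 := Nat.succ_sub hn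
      haveI hO : ((K (i - n)).subgroupOf (K (i - n + 1))).Normal :=
        normal_subgroupOf_of_conj (kconj (i - n))
      refine qprop_lift hinj ((QuotientGroup.mk' _).comp (MonoidHom.mk'
        (fun k : ↥(K (i - n + 1)) =>
          (⟨((1 : X), (k.1 : Y)), Subgroup.mem_prod.mpr
            ⟨one_mem _, (by rw [e3]; exact k.2)⟩⟩ :
            ↥((H (min (i + 1) n)).prod (K (i + 1 - n)))))
        (fun a b => Subtype.ext (Prod.ext (one_mul (1 : X)).symm rfl))))
        ?_ ?_ (kfac (i - n) hO)
      · intro x hx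
        simp only [MonoidHom.comp_apply, QuotientGroup.mk'_apply, QuotientGroup.eq_one_iff]
        refine Subgroup.mem_subgroupOf.mpr (Subgroup.mem_prod.mpr ⟨one_mem _, ?_⟩)
        exact Subgroup.mem_subgroupOf.mp hx
      · intro q
        induction q using QuotientGroup.induction_on with
        | H y =>
          have hy2 : (y.1.2 : Y) ∈ K (i - n + 1) := by
            have := (Subgroup.mem_prod.mp y.2).2; rwa [e3] at this
          refine ⟨⟨y.1.2, hy2⟩, ?_⟩
          simp only [MonoidHom.comp_apply, QuotientGroup.mk'_apply]
          refine QuotientGroup.eq.mpr ?_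
          refine Subgroup.mem_subgroupOf.mpr (Subgroup.mem_prod.mpr ⟨?_, ?_⟩)
          · rw [e2, htop]; exact Subgroup.mem_top _
          · simpa using one_mem (K (i - n))
    · have e1 : min (i + 1) n = i + 1 := min_eq_left hn
      have e2 : min i n = i := min_eq_left hn.le
      have e3 : i + 1 - n = 0 := Nat.sub_eq_zero_of_le hn
      haveI hO : ((H i).subgroupOf (H (i + 1))).Normal :=
        normal_subgroupOf_of_conj (hconj i)
      refine qprop_lift hinj ((QuotientGroup.mk' _).comp (MonoidHom.mk'
        (fun a : ↥(H (i + 1)) =>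
          (⟨((a.1 : X), (1 : Y)), Subgroup.mem_prod.mpr
            ⟨(by rw [e1]; exact a.2), one_mem _⟩⟩ :
            ↥((H (min (i + 1) n)).prod (K (i + 1 - n)))))
        (fun a b => Subtype.ext (Prod.ext rfl (one_mul (1 : Y)).symm))))
        ?_ ?_ (hfac i hO)
      · intro x hx
        simp only [MonoidHom.comp_apply, QuotientGroup.mk'_apply, QuotientGroup.eq_one_iff]
        refine Subgroup.mem_subgroupOf.mpr (Subgroup.mem_prod.mpr ⟨?_, one_mem _⟩)
        rw [e2]; exact Subgroup.mem_subgroupOf.mp hx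
      · intro q
        induction q using QuotientGroup.induction_on with
        | H y =>
          have hy1 : (y.1.1 : X) ∈ H (i + 1) := by
            have := (Subgroup.mem_prod.mp y.2).1; rwa [e1] at this
          have hy2 : (y.1.2 : Y) = 1 := by
            have := (Subgroup.mem_prod.mp y.2).2
            rw [e3, k0] at this
            exact Subgroup.mem_bot.mp this
          refine ⟨⟨y.1.1, hy1⟩, ?_⟩
          simp only [MonoidHom.comp_apply, QuotientGroup.mk'_apply]
          refine QuotientGroup.eq.mpr ?_
          refine Subgroup.mem_subgroupOf.mpr (Subgroup.mem_prod.mpr ⟨?_, ?_⟩)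
          · rw [e2]; simpa using one_mem (H i)
          · simpa [hy2] using one_mem (K (i - n))

end Series

/-- The multiplicative equivalence `H ≃* ker (fst : G × H →* G)`. -/
def kerFstMulEquiv (G H : Type u) [Group G] [Group H] :
    H ≃* ↥(MonoidHom.fst G H).ker where
  toFun h := ⟨(1, h), rfl⟩
  invFun n := n.1.2
  left_inv h := rfl
  right_inv n := Subtype.ext (Prod.ext (show (1 : G) = n.1.1 from
    (MonoidHom.mem_ker.mp n.2).symm) rfl)
  map_mul' a b := Subtype.ext (Prod.ext (one_mul (1 : G)).symm rfl)

theorem qprop_prod {P : Set ℕ} {Φ : ∀ (A : Type u) [Group A], ℕ → Prop}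
    (hinj : InjTrans Φ) (hext : ExtTrans P Φ) {G H : Type u} [Group G] [Group H]
    (hcG : ∀ x y : G, x * y = y * x) (hcH : ∀ x y : H, x * y = y * x)
    (hG : QProp P Φ G) (hH : QProp P Φ H) : QProp P Φ (G × H) := by
  have hcomm : ∀ x y : G × H, x * y = y * x := fun x y =>
    Prod.ext (hcG _ _) (hcH _ _)
  refine qprop_ext hinj hext hcomm (MonoidHom.fst G H).ker ?_ ?_
  · exact qprop_equiv hinj (kerFstMulEquiv G H) hH
  · have hsur : Surjective (MonoidHom.fst G H) := fun g => ⟨(g, 1), rfl⟩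
    exact qprop_equiv hinj
      (QuotientGroup.quotientKerEquivOfSurjective _ hsur).symm hG

end Machinery

/-- Proposition 5.2: the classes of `C`-bounded abelian, weakly `C`-bounded
abelian, `C`-bounded nilpotent, weakly `C`-bounded nilpotent, `C`-bounded solvable, and weakly
`C`-bounded solvable groups are closed under subgroups, quotients and finite direct products;
moreover an abelian (weakly) `C`-bounded solvable group is a (weakly) `C`-bounded abelian
group. -/
theorem statement14 (C : GroupClass.{u}) (hroot : IsRootClass C) (hper : IsPeriodicClass C) :
    ClosedSQP (BAclass C) ∧ ClosedSQP (wBAclass (classPrimes C)) ∧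
    ClosedSQP (BNclass C) ∧ ClosedSQP (wBNclass (classPrimes C)) ∧
    ClosedSQP (BSclass C) ∧ ClosedSQP (wBSclass (classPrimes C)) ∧
    (∀ (X : Type u) [CommGroup X], BoundedSolvable C X → Bounded C X) ∧
    (∀ (X : Type u) [CommGroup X],
      WeaklyBoundedSolvable (classPrimes C) X → WeaklyBounded (classPrimes C) X) := by
  have hinjB : InjTrans (PhiB C) := phiB_inj
  have hextB : ExtTrans (classPrimes C) (PhiB C) := phiB_ext hroot
  refine ⟨⟨?_, ?_, ?_⟩, ⟨?_, ?_, ?_⟩, ⟨?_, ?_, ?_⟩, ⟨?_, ?_, ?_⟩, ⟨?_, ?_, ?_⟩,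
    ⟨?_, ?_, ?_⟩, ?_, ?_⟩
  · rintro G _ ⟨hc, hb⟩ S
    exact ⟨comm_subgroup hc S, bounded_iff_qprop.mpr (qprop_inj_comm hinjB hc
      S.subtype S.subtype_injective (bounded_iff_qprop.mp hb))⟩
  · rintro G _ ⟨hc, hb⟩ N _
    exact ⟨comm_quotient hc N, bounded_iff_qprop.mpr (qprop_surj hinjB
      (QuotientGroup.mk' N) (QuotientGroup.mk'_surjective N) (bounded_iff_qprop.mp hb))⟩
  · rintro G H _ _ ⟨hcG, hbG⟩ ⟨hcH, hbH⟩
    exact ⟨fun x y => Prod.ext (hcG _ _) (hcH _ _), bounded_iff_qprop.mpr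
      (qprop_prod hinjB hextB hcG hcH (bounded_iff_qprop.mp hbG) (bounded_iff_qprop.mp hbH))⟩
  · rintro G _ ⟨hc, hb⟩ S
    exact ⟨comm_subgroup hc S, weaklyBounded_iff_qprop.mpr (qprop_inj_comm phiW_inj hc
      S.subtype S.subtype_injective (weaklyBounded_iff_qprop.mp hb))⟩
  · rintro G _ ⟨hc, hb⟩ N _
    exact ⟨comm_quotient hc N, weaklyBounded_iff_qprop.mpr (qprop_surj phiW_inj
      (QuotientGroup.mk' N) (QuotientGroup.mk'_surjective N)
      (weaklyBounded_iff_qprop.mp hb))⟩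
  · rintro G H _ _ ⟨hcG, hbG⟩ ⟨hcH, hbH⟩
    exact ⟨fun x y => Prod.ext (hcG _ _) (hcH _ _), weaklyBounded_iff_qprop.mpr
      (qprop_prod phiW_inj phiW_ext hcG hcH (weaklyBounded_iff_qprop.mp hbG)
        (weaklyBounded_iff_qprop.mp hbH))⟩
  · intro G _ hb S
    exact boundedNilpotent_iff.mpr (gnilp_subgroup hinjB (boundedNilpotent_iff.mp hb) S)
  · intro G _ hb N _
    exact boundedNilpotent_iff.mpr (gnilp_surj hinjB (QuotientGroup.mk' N)
      (QuotientGroup.mk'_surjective N) (boundedNilpotent_iff.mp hb))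
  · intro G H _ _ hbG hbH
    exact boundedNilpotent_iff.mpr (gnilp_prod hinjB (boundedNilpotent_iff.mp hbG)
      (boundedNilpotent_iff.mp hbH))
  · intro G _ hb S
    have hb' : GNilp (classPrimes C) PhiW G := hb
    show WeaklyBoundedNilpotent (classPrimes C) ↥S
    exact gnilp_subgroup phiW_inj hb' S
  · intro G _ hb N _
    have hb' : GNilp (classPrimes C) PhiW G := hb
    show WeaklyBoundedNilpotent (classPrimes C) (G ⧸ N)
    exact gnilp_surj phiW_inj (QuotientGroup.mk' N) (QuotientGroup.mk'_surjective N) hb'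
  · intro G H _ _ hbG hbH
    have hbG' : GNilp (classPrimes C) PhiW G := hbG
    have hbH' : GNilp (classPrimes C) PhiW H := hbH
    show WeaklyBoundedNilpotent (classPrimes C) (G × H)
    exact gnilp_prod phiW_inj hbG' hbH'
  · intro G _ hb S
    exact boundedSolvable_iff.mpr (gsolv_subgroup hinjB (boundedSolvable_iff.mp hb) S)
  · intro G _ hb N _
    exact boundedSolvable_iff.mpr (gsolv_surj hinjB (QuotientGroup.mk' N)
      (QuotientGroup.mk'_surjective N) (boundedSolvable_iff.mp hb))
  · intro G H _ _ hbG hbH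
    exact boundedSolvable_iff.mpr (gsolv_prod hinjB (boundedSolvable_iff.mp hbG)
      (boundedSolvable_iff.mp hbH))
  · intro G _ hb S
    have hb' : GSolv (classPrimes C) PhiW G := hb
    show WeaklyBoundedSolvable (classPrimes C) ↥S
    exact gsolv_subgroup phiW_inj hb' S
  · intro G _ hb N _
    have hb' : GSolv (classPrimes C) PhiW G := hb
    show WeaklyBoundedSolvable (classPrimes C) (G ⧸ N)
    exact gsolv_surj phiW_inj (QuotientGroup.mk' N) (QuotientGroup.mk'_surjective N) hb'
  · intro G H _ _ hbG hbH
    have hbG' : GSolv (classPrimes C) PhiW G := hbG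
    have hbH' : GSolv (classPrimes C) PhiW H := hbH
    show WeaklyBoundedSolvable (classPrimes C) (G × H)
    exact gsolv_prod phiW_inj hbG' hbH'
  · intro X _ h
    obtain ⟨n, H, h0, htop, hmono, -, -, hfac⟩ := boundedSolvable_iff.mp h
    exact bounded_iff_qprop.mpr (qprop_series hinjB hextB (phiB_triv hroot)
      mul_comm n H h0 htop hmono hfac)
  · intro X _ h
    obtain ⟨n, H, h0, htop, hmono, -, -, hfac⟩ := weaklyBoundedSolvable_iff.mp h
    exact weaklyBounded_iff_qprop.mpr (qprop_series phiW_inj phiW_ext phiW_triv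
      mul_comm n H h0 htop hmono hfac)

end Paper
end

section
/- Let 𝒞 be a root class of groups consisting only of periodic groups. If X is a periodic 𝒞-bounded solvable group whose exponent is finite and is a 𝔓(𝒞)-number, then X belongs to 𝒞. -/
universe u

namespace Paper

lemma ctriv (C : GroupClass.{u}) (hroot : IsRootClass C) (T : Type u) [Group T]
    (hT : Subsingleton T) : C T := by
  obtain ⟨hiso, ⟨G, _, hG, -⟩, hsub, -, -⟩ := hroot
  have hbot : C ↑(⊥ : Subgroup G) := hsub G hG ⊥
  haveI : Subsingleton ↑(⊥ : Subgroup G) :=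
    ⟨fun a b => Subtype.ext (by rw [Subgroup.mem_bot.mp a.2, Subgroup.mem_bot.mp b.2])⟩
  exact hiso _ _
    { toFun := fun _ => 1, invFun := fun _ => 1,
      left_inv := fun x => Subsingleton.elim _ _,
      right_inv := fun x => Subsingleton.elim _ _,
      map_mul' := fun _ _ => Subsingleton.elim _ _ } hbot

lemma cycP (C : GroupClass.{u}) (hper : IsPeriodicClass C) (p : ℕ)
    (hpP : p ∈ classPrimes C) :
    ∃ (G : Type u) (_ : Group G), C G ∧ ∃ h : G, orderOf h = p := by
  obtain ⟨hp, G, _, hCG, g, hdvd⟩ := hpP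
  have h0 : orderOf g ≠ 0 := (hper G hCG g).orderOf_pos.ne'
  have hdiv0 : orderOf g / p ≠ 0 :=
    Nat.div_ne_zero_iff.mpr ⟨hp.ne_zero, Nat.le_of_dvd (Nat.pos_of_ne_zero h0) hdvd⟩
  refine ⟨G, inferInstance, hCG, g ^ (orderOf g / p), ?_⟩
  rw [orderOf_pow' g hdiv0, Nat.gcd_eq_right (Nat.div_dvd_of_dvd hdvd),
    Nat.div_div_self hdvd h0]

lemma exists_coord (K : Type*) (V : Type*) [Field K] [AddCommGroup V] [Module K V] :
    ∃ (ι : Set V) (F : V →+ (↥ι → K)), Function.Injective F := by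
  let b := Module.Basis.ofVectorSpace K V
  refine ⟨Module.Basis.ofVectorSpaceIndex K V,
    { toFun := fun v i => b.repr v i,
      map_zero' := by funext i; simp
      map_add' := by intro x y; funext i; simp }, ?_⟩
  intro x y hxy
  apply b.repr.injective
  ext i
  exact congrFun hxy i

lemma elem_abelian (C : GroupClass.{u}) (hroot : IsRootClass C) (hper : IsPeriodicClass C)
    (p : ℕ) (hpP : p ∈ classPrimes C)
    (A : Type u) [CommGroup A] (hA : ∀ x : A, x ^ p = 1)
    (G2 : Type u) [Group G2] (hG2 : C G2) (hcard : Cardinal.mk A ≤ Cardinal.mk G2) :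
    C A := by
  classical
  obtain ⟨hiso, -, hsub, -, hprod⟩ := hroot
  have hp : p.Prime := hpP.1
  haveI : Fact p.Prime := ⟨hp⟩
  haveI : NeZero p := ⟨hp.ne_zero⟩
  obtain ⟨G1, _, hCG1, h, hord⟩ := cycP C hper p hpP
  letI : Module (ZMod p) (Additive A) := AddCommGroup.zmodModule (by
    intro x
    apply Additive.toMul.injective
    show Additive.toMul (p • x) = Additive.toMul (0 : Additive A)
    rw [toMul_nsmul]
    exact hA _)
  obtain ⟨ι, F, hF⟩ := exists_coord (ZMod p) (Additive A)
  have hcι : Cardinal.mk ↑ι ≤ Cardinal.mk G2 := by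
    refine le_trans (Cardinal.mk_set_le _) (le_trans ?_ hcard)
    exact le_of_eq (Cardinal.mk_congr Additive.toMul)
  obtain ⟨j⟩ := (Cardinal.le_def _ _).mp hcι
  let f : A → G2 → G1 := fun a =>
    Function.extend j (fun i => h ^ (F (Additive.ofMul a) i).val) (fun _ => 1)
  have hval : ∀ (x y : ZMod p), h ^ (x + y).val = h ^ x.val * h ^ y.val := by
    intro x y
    have key : ∀ m : ℕ, h ^ (m % p) = h ^ m := by
      intro m
      rw [← hord]
      exact pow_mod_orderOf _ _
    rw [ZMod.val_add, key, pow_add]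
  have hmul : ∀ a a' : A, f (a * a') = f a * f a' := by
    intro a a'
    funext g
    show _ = f a g * f a' g
    simp only [f, Function.extend_def]
    split_ifs with hg
    · rw [show Additive.ofMul (a * a') = Additive.ofMul a + Additive.ofMul a' from rfl,
        map_add]
      exact hval _ _
    · rw [one_mul]
  let Φ : A →* (G2 → G1) :=
    { toFun := f
      map_one' := by
        funext g
        show f 1 g = 1
        simp only [f, Function.extend_def]
        split_ifs with hg
        · rw [show Additive.ofMul (1 : A) = 0 from rfl, map_zero]
          simp
        · rfl
      map_mul' := hmul }
  have hinj : Function.Injective Φ := by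
    rw [injective_iff_map_eq_one]
    intro a ha
    have hco : F (Additive.ofMul a) = 0 := by
      funext i
      have h1 : f a (j i) = 1 := congrFun ha (j i)
      rw [show f a (j i) = h ^ (F (Additive.ofMul a) i).val from
          Function.Injective.extend_apply j.injective _ _ _] at h1
      have hdvd : orderOf h ∣ (F (Additive.ofMul a) i).val := orderOf_dvd_of_pow_eq_one h1
      rw [hord] at hdvd
      exact (ZMod.val_eq_zero _).mp (Nat.eq_zero_of_dvd_of_lt hdvd (ZMod.val_lt _))
    have h0 : Additive.ofMul a = 0 := hF (by rw [hco, map_zero])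
    exact ofMul_eq_zero.mp h0
  have hT : C (G2 → G1) := hprod G1 G2 hCG1 hG2
  have hR : C ↑Φ.range := hsub _ hT Φ.range
  exact hiso _ _ (MonoidHom.ofInjective hinj).symm hR
lemma abelianQuot (C : GroupClass.{u}) (hroot : IsRootClass C) (hper : IsPeriodicClass C)
    (A : Type u) [CommGroup A] (hb : Bounded C A) :
    ∀ n : ℕ, IsPNumber (classPrimes C) n → ∀ N : Subgroup A,
      Monoid.exponent (A ⧸ N) ∣ n → C (A ⧸ N) := by
  intro n
  induction n using Nat.strong_induction_on with
  | _ n IH =>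
    intro hn N hexp
    by_cases h1 : n = 1
    · subst h1
      have he1 : Monoid.exponent (A ⧸ N) = 1 := Nat.dvd_one.mp hexp
      refine ctriv C hroot _ ⟨fun a b => ?_⟩
      have ha := Monoid.pow_exponent_eq_one a
      have hbq := Monoid.pow_exponent_eq_one b
      rw [he1, pow_one] at ha hbq
      rw [ha, hbq]
    · -- n > 1
      set p := n.minFac with hpdef
      have hp : p.Prime := Nat.minFac_prime h1
      have hpn : p ∣ n := Nat.minFac_dvd n
      have hpP : p ∈ classPrimes C := hn.2 p hp hpn
      set K := (powMonoidHom p : (A ⧸ N) →* (A ⧸ N)).ker with hKdef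
      -- elementary abelian kernel
      have hKel : ∀ x : ↥K, x ^ p = 1 := by
        intro x
        apply Subtype.ext
        have hx := x.2
        rw [MonoidHom.mem_ker, powMonoidHom_apply] at hx
        simpa using hx
      obtain ⟨-, G2, _, hCG2, hcard⟩ := hb N p hpP
      have hKcard : Cardinal.mk ↥K ≤ Cardinal.mk G2 := by
        refine le_trans (Cardinal.mk_le_of_injective
          (f := fun x : ↥K => (⟨x.1, 1, by
            rw [pow_one]
            have hx := x.2
            rwa [MonoidHom.mem_ker, powMonoidHom_apply] at hx⟩ :
            {x : A ⧸ N // ∃ m : ℕ, x ^ p ^ m = 1})) ?_) hcard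
        intro x y hxy
        simp only [Subtype.mk.injEq] at hxy
        exact Subtype.ext hxy
      have hCK : C ↥K := elem_abelian C hroot hper p hpP ↥K hKel G2 hCG2 hKcard
      -- quotient by K
      set K' := K.comap (QuotientGroup.mk' N) with hK'def
      have hNK' : N ≤ K' := by
        intro a ha
        rw [Subgroup.mem_comap]
        have : QuotientGroup.mk' N a = 1 := (QuotientGroup.eq_one_iff a).mpr ha
        rw [this]
        exact K.one_mem
      have hmap : K'.map (QuotientGroup.mk' N) = K :=
        Subgroup.map_comap_eq_self_of_surjective (QuotientGroup.mk'_surjective N) K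
      have hm : n / p < n := Nat.div_lt_self hn.1 hp.one_lt
      have hmP : IsPNumber (classPrimes C) (n / p) := by
        refine ⟨Nat.div_pos (Nat.minFac_le hn.1) hp.pos, fun q hq hqd => ?_⟩
        exact hn.2 q hq (hqd.trans (Nat.div_dvd_of_dvd hpn))
      have hexp' : Monoid.exponent (A ⧸ K') ∣ n / p := by
        apply Monoid.exponent_dvd_of_forall_pow_eq_one
        intro x
        induction x using QuotientGroup.induction_on with
        | _ a =>
          rw [← QuotientGroup.mk_pow, QuotientGroup.eq_one_iff]
          rw [Subgroup.mem_comap, MonoidHom.mem_ker, powMonoidHom_apply]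
          rw [map_pow, ← pow_mul, Nat.div_mul_cancel hpn]
          obtain ⟨k, hk⟩ := hexp
          rw [hk, pow_mul, Monoid.pow_exponent_eq_one, one_pow]
      have hCQ' : C (A ⧸ K') := IH (n / p) hm hmP K' hexp'
      have hCQK : C ((A ⧸ N) ⧸ K) :=
        hroot.1 _ _ ((QuotientGroup.quotientQuotientEquivQuotient N K' hNK').symm.trans
          (QuotientGroup.quotientMulEquivOfEq hmap)) hCQ'
      exact hroot.2.2.2.1 (A ⧸ N) K hCK hCQK

/-- Proposition 6.1: a periodic `C`-bounded solvable group whose exponent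
is finite and is a `𝔓(C)`-number belongs to `C`. -/
theorem statement15 (C : GroupClass.{u}) (hroot : IsRootClass C) (hper : IsPeriodicClass C)
    (X : Type u) [Group X] (hX : BoundedSolvable C X) (htor : Monoid.IsTorsion X)
    (hP : IsPNumber (classPrimes C) (Monoid.exponent X)) : C X := by
  classical
  obtain ⟨n, H, h0, hn, hle, hconj, hcommH, hbd⟩ := hX
  have key : ∀ i, C ↑(H i) := by
    intro i
    induction i with
    | zero =>
      rw [h0]
      refine ctriv C hroot _ ?_
      exact ⟨fun a b => Subtype.ext (by rw [Subgroup.mem_bot.mp a.2, Subgroup.mem_bot.mp b.2])⟩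
    | succ i ih =>
      set N := (H i).subgroupOf (H (i + 1)) with hNdef
      haveI hN : N.Normal := by
        constructor
        intro x hx g
        rw [hNdef, Subgroup.mem_subgroupOf] at hx ⊢
        have := hconj i (↑g) g.2 (↑x) hx
        simpa using this
      have hfb : Bounded C (↑(H (i + 1)) ⧸ N) := hbd i hN
      have hcm : ∀ a b : (↑(H (i + 1)) ⧸ N), a * b = b * a := by
        intro a b
        induction a using QuotientGroup.induction_on with
        | _ x =>
          induction b using QuotientGroup.induction_on with
          | _ y =>
            rw [← QuotientGroup.mk_mul, ← QuotientGroup.mk_mul]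
            rw [QuotientGroup.eq]
            rw [hNdef, Subgroup.mem_subgroupOf]
            have h2 := hcommH i ((↑y)⁻¹ : X) (Subgroup.inv_mem _ y.2)
              ((↑x)⁻¹ : X) (Subgroup.inv_mem _ x.2)
            simp only [inv_inv] at h2
            have he : (↑(((x * y)⁻¹) * (y * x)) : X)
                = (↑y)⁻¹ * (↑x)⁻¹ * ↑y * ↑x := by
              push_cast
              group
            rwa [he]
      letI : CommGroup (↑(H (i + 1)) ⧸ N) :=
        { (inferInstance : Group (↑(H (i + 1)) ⧸ N)) with mul_comm := hcm }
      have hexpF : ∀ g : (↑(H (i + 1)) ⧸ N), g ^ Monoid.exponent X = 1 := by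
        intro g
        induction g using QuotientGroup.induction_on with
        | _ y =>
          rw [← QuotientGroup.mk_pow]
          have hy : y ^ Monoid.exponent X = 1 := by
            apply Subtype.ext
            have : ((y : X)) ^ Monoid.exponent X = 1 := Monoid.pow_exponent_eq_one _
            simpa using this
          rw [hy]
          rfl
      have hexpQ : Monoid.exponent ((↑(H (i + 1)) ⧸ N) ⧸ (⊥ : Subgroup (↑(H (i + 1)) ⧸ N)))
          ∣ Monoid.exponent X := by
        apply Monoid.exponent_dvd_of_forall_pow_eq_one
        intro g
        induction g using QuotientGroup.induction_on with
        | _ y =>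
          rw [← QuotientGroup.mk_pow, hexpF y]
          rfl
      have hPB : C ((↑(H (i + 1)) ⧸ N) ⧸ (⊥ : Subgroup (↑(H (i + 1)) ⧸ N))) :=
        abelianQuot C hroot hper (↑(H (i + 1)) ⧸ N) hfb (Monoid.exponent X) hP ⊥ hexpQ
      have hCF : C (↑(H (i + 1)) ⧸ N) :=
        hroot.1 _ _ QuotientGroup.quotientBot hPB
      have hCN : C ↑N :=
        hroot.1 _ _ (Subgroup.subgroupOfEquivOfLe (hle i)).symm ih
      exact hroot.2.2.2.1 (↑(H (i + 1))) N hCN hCF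
  have htop := key n
  rw [hn] at htop
  exact hroot.1 _ _ Subgroup.topEquiv htop


end Paper
end

section
/- Let 𝒞 be a root class of groups consisting only of periodic groups, let X be a weakly 𝒞-bounded nilpotent group, and let Y be a periodic subgroup of X. If the exponent m of Y is finite and is a 𝔓(𝒞)-number, then there exists n ≥ 1 such that Y ∩ X^{m^n} = 1, where X^{k} denotes the subgroup of X generated by all k-th powers of elements of X. -/
universe u

namespace Paper

/-- `X ^ k`: the subgroup of `X` generated by all `k`-th powers of elements of `X`. -/
def powSubgroup (X : Type u) [Group X] (k : ℕ) : Subgroup X :=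
  Subgroup.closure {x : X | ∃ g : X, g ^ k = x}

lemma lemCent {G : Type u} [Group G] (Z : Subgroup G)
    (hcen : ∀ z ∈ Z, ∀ g : G, z * g = g * z) (M : ℕ)
    (hexp : ∀ z ∈ Z, z ^ M = 1) (u : G) (hu : ∀ g : G, u * g * u⁻¹ * g⁻¹ ∈ Z) :
    ∀ g : G, u ^ M * g = g * u ^ M := by
  intro g
  have key : ∀ k : ℕ, u ^ k * g * (u ^ k)⁻¹ * g⁻¹ = (u * g * u⁻¹ * g⁻¹) ^ k := by
    intro k
    induction k with
    | zero => simp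
    | succ k ih =>
      have hcZ : (u * g * u⁻¹ * g⁻¹) ^ k ∈ Z := pow_mem (hu g) k
      calc u ^ (k+1) * g * (u ^ (k+1))⁻¹ * g⁻¹
          = u * (u ^ k * g * (u ^ k)⁻¹ * g⁻¹) * (g * u⁻¹ * g⁻¹) := by group
        _ = u * (u * g * u⁻¹ * g⁻¹) ^ k * (g * u⁻¹ * g⁻¹) := by rw [ih]
        _ = (u * g * u⁻¹ * g⁻¹) ^ k * u * (g * u⁻¹ * g⁻¹) := by
              rw [← hcen _ hcZ u]
        _ = (u * g * u⁻¹ * g⁻¹) ^ (k+1) := by rw [pow_succ]; group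
  have h2 := key M
  rw [hexp _ (hu g)] at h2
  have h3 : (u ^ M * g) * (g * u ^ M)⁻¹ = 1 := by
    rw [mul_inv_rev]
    simpa [mul_assoc] using h2
  exact mul_inv_eq_one.mp h3

lemma lemC (q E : ℕ) : ∀ (t : ℕ) (G : Type u) [Group G] (K : ℕ → Subgroup G),
    K 0 = ⊥ →
    (∀ j, j < t → ∀ x ∈ K (j+1), ∀ g : G, x * g * x⁻¹ * g⁻¹ ∈ K j) →
    (∀ j, j ≤ t → ∀ c ∈ K j, c ^ q ^ E = 1) →
    ∀ h : G, (∀ g : G, h * g * h⁻¹ * g⁻¹ ∈ K t) →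
    ∀ g : G, h ^ q ^ (t * E) * g = g * h ^ q ^ (t * E) := by
  intro t
  induction t with
  | zero =>
    intro G _ K hK0 _ _ h hh g
    have h1 : h * g * h⁻¹ * g⁻¹ = 1 := by
      have := hh g; rw [hK0] at this; simpa using this
    have h2 : h * g = g * h := by
      refine mul_inv_eq_one.mp ?_
      rw [mul_inv_rev]
      simpa [mul_assoc] using h1
    simpa using h2
  | succ t ih =>
    intro G _ K hK0 hcm hexp h hh g
    have hcen : ∀ z ∈ K 1, ∀ g' : G, z * g' = g' * z := by
      intro z hz g'
      have h1 := hcm 0 (Nat.succ_pos t) z hz g'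
      rw [hK0] at h1
      have h1' : z * g' * z⁻¹ * g'⁻¹ = 1 := by simpa using h1
      refine mul_inv_eq_one.mp ?_
      rw [mul_inv_rev]
      simpa [mul_assoc] using h1'
    haveI hnorm : (K 1).Normal := by
      constructor
      intro x hx g'
      have h1 : g' * x * g'⁻¹ = x := by rw [← hcen x hx g']; group
      rw [h1]; exact hx
    set π := QuotientGroup.mk' (K 1) with hπ
    have main := ih (G ⧸ K 1) (fun j => (K (j+1)).map π)
      (by rw [Subgroup.map_eq_bot_iff, QuotientGroup.ker_mk'])
      (by
        rintro j hj xb hxb gb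
        obtain ⟨x, hx, rfl⟩ := hxb
        obtain ⟨g', rfl⟩ := QuotientGroup.mk'_surjective (K 1) gb
        exact ⟨x * g' * x⁻¹ * g'⁻¹, hcm (j+1) (by omega) x hx g', by simp [hπ, QuotientGroup.mk'_apply]⟩)
      (by
        rintro j hj cb hcb
        obtain ⟨c, hc, rfl⟩ := hcb
        rw [← map_pow, hexp (j+1) (by omega) c hc, map_one])
      (π h)
      (by
        intro gb
        obtain ⟨g', rfl⟩ := QuotientGroup.mk'_surjective (K 1) gb
        exact ⟨h * g' * h⁻¹ * g'⁻¹, hh g', by simp [hπ, QuotientGroup.mk'_apply]⟩)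
    have hu : ∀ g' : G, (h ^ q ^ (t * E)) * g' * (h ^ q ^ (t * E))⁻¹ * g'⁻¹ ∈ K 1 := by
      intro g'
      have h1 : π ((h ^ q ^ (t * E)) * g' * (h ^ q ^ (t * E))⁻¹ * g'⁻¹) = 1 := by
        simp only [map_mul, map_inv, map_pow]
        rw [main (π g')]
        group
      have h2 : ((h ^ q ^ (t * E)) * g' * (h ^ q ^ (t * E))⁻¹ * g'⁻¹) ∈ π.ker := by
        rw [MonoidHom.mem_ker]; exact h1
      rwa [hπ, QuotientGroup.ker_mk'] at h2
    have hres := lemCent (K 1) hcen (q ^ E) (hexp 1 (by omega)) (h ^ q ^ (t * E)) hu g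
    have harith : (h ^ q ^ (t * E)) ^ q ^ E = h ^ q ^ ((t + 1) * E) := by
      rw [← pow_mul, ← pow_add, Nat.succ_mul]
    rwa [harith] at hres


section Series

variable {X : Type u} [Group X]

/-- Subgroup generated by `q^(j!)`-th powers of elements of `H j`, for `j ≤ i`. -/
def Wsub (H : ℕ → Subgroup X) (q i : ℕ) : Subgroup X :=
  Subgroup.closure {x : X | ∃ j, j ≤ i ∧ ∃ c ∈ H j, c ^ q ^ (Nat.factorial j) = x}

variable (H : ℕ → Subgroup X) (q : ℕ)

lemma Wsub_mem {i j : ℕ} (hj : j ≤ i) {c : X} (hc : c ∈ H j) :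
    c ^ q ^ (Nat.factorial j) ∈ Wsub H q i :=
  Subgroup.subset_closure ⟨j, hj, c, hc, rfl⟩

lemma Wsub_mono {i j : ℕ} (hj : j ≤ i) : Wsub H q j ≤ Wsub H q i := by
  apply Subgroup.closure_mono
  rintro x ⟨j', hj', c, hc, rfl⟩
  exact ⟨j', le_trans hj' hj, c, hc, rfl⟩

variable (hle : ∀ i, H i ≤ H (i+1))
  (hcm : ∀ i, ∀ x ∈ H (i+1), ∀ g : X, x * g * x⁻¹ * g⁻¹ ∈ H i)

include hle hcm in
lemma Hnormal : ∀ j, ∀ x ∈ H j, ∀ g : X, g * x * g⁻¹ ∈ H j := by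
  intro j x hx g
  have h2 : x⁻¹ * g * x * g⁻¹ ∈ H j := by
    have := hcm j x⁻¹ (hle j (inv_mem hx)) g
    simpa using this
  have h3 : g * x * g⁻¹ = x * (x⁻¹ * g * x * g⁻¹) := by group
  rw [h3]; exact mul_mem hx h2

include hle hcm in
lemma Wsub_normal (i : ℕ) : (Wsub H q i).Normal := by
  constructor
  intro x hx g
  revert g
  refine Subgroup.closure_induction (p := fun y _ => ∀ g : X, g * y * g⁻¹ ∈ Wsub H q i)
    ?_ ?_ ?_ ?_ hx
  · rintro y ⟨j, hj, c, hc, rfl⟩ g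
    refine Subgroup.subset_closure ⟨j, hj, g * c * g⁻¹, Hnormal H hle hcm j c hc g, ?_⟩
    rw [conj_pow]
  · intro g; simpa using (Wsub H q i).one_mem
  · intro a b _ _ ha hb g
    have h3 : g * (a * b) * g⁻¹ = (g * a * g⁻¹) * (g * b * g⁻¹) := by group
    rw [h3]; exact mul_mem (ha g) (hb g)
  · intro a _ ha g
    have h3 : g * a⁻¹ * g⁻¹ = (g * a * g⁻¹)⁻¹ := by group
    rw [h3]; exact inv_mem (ha g)

variable (h0 : H 0 = ⊥)

include h0 hle hcm in
lemma lemA' (i : ℕ) (h : X) (hh : h ∈ H (i+1)) (y : X) :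
    ∃ ε ∈ Wsub H q i,
      y ^ q * h ^ q ^ (i * Nat.factorial i + 1)
        = (y * h ^ q ^ (i * Nat.factorial i)) ^ q * ε := by
  haveI hnorm := Wsub_normal H q hle hcm i
  set N := Wsub H q i with hN
  set π := QuotientGroup.mk' N with hπ
  have hcent := lemC q (Nat.factorial i) i (X ⧸ N) (fun j => (H j).map π)
    (by show (H 0).map π = ⊥; rw [h0, Subgroup.map_bot])
    (by
      rintro j hj xb hxb gb
      obtain ⟨x, hx, rfl⟩ := hxb
      obtain ⟨g', rfl⟩ := QuotientGroup.mk'_surjective N gb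
      exact ⟨x * g' * x⁻¹ * g'⁻¹, hcm j x hx g', by simp [hπ, QuotientGroup.mk'_apply]⟩)
    (by
      rintro j hj cb hcb
      obtain ⟨c, hc, rfl⟩ := hcb
      rw [← map_pow]
      have harith : q ^ Nat.factorial j * q ^ (Nat.factorial i - Nat.factorial j)
          = q ^ Nat.factorial i := by
        rw [← pow_add, Nat.add_sub_cancel' (Nat.factorial_le hj)]
      have hmem : c ^ q ^ Nat.factorial i ∈ N := by
        rw [← harith, pow_mul]
        exact pow_mem (Wsub_mem H q hj hc) _
      have : π (c ^ q ^ Nat.factorial i) = 1 := by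
        rw [hπ, QuotientGroup.mk'_apply, QuotientGroup.eq_one_iff]; exact hmem
      rw [this])
    (π h)
    (by
      intro gb
      obtain ⟨g', rfl⟩ := QuotientGroup.mk'_surjective N gb
      exact ⟨h * g' * h⁻¹ * g'⁻¹, hcm i h hh g', by simp [hπ, QuotientGroup.mk'_apply]⟩)
  set A := i * Nat.factorial i with hA
  have hcomm2 : Commute (π y) ((π h) ^ q ^ A) := (hcent (π y)).symm
  have key : π ((y * h ^ q ^ A) ^ q) = π (y ^ q * h ^ q ^ (A + 1)) := by
    rw [map_pow, map_mul, map_pow, (hcomm2).mul_pow, map_mul, map_pow, map_pow,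
      ← pow_mul, ← pow_succ]
  have hmemN : ((y * h ^ q ^ A) ^ q)⁻¹ * (y ^ q * h ^ q ^ (A + 1)) ∈ N := by
    have key' : ((((y * h ^ q ^ A) ^ q : X)) : X ⧸ N) = ((y ^ q * h ^ q ^ (A + 1) : X) : X ⧸ N) := by
      simpa [hπ, QuotientGroup.mk'_apply] using key
    exact QuotientGroup.eq.mp key'
  refine ⟨_, hmemN, (mul_inv_cancel_left _ _).symm⟩

include h0 hle hcm in
lemma absorb : ∀ i, ∀ x ∈ Wsub H q i, ∀ y : X, ∃ z : X, z ^ q = y ^ q * x := by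
  intro i
  induction i with
  | zero =>
    intro x hx y
    have hsub : Wsub H q 0 ≤ ⊥ := by
      rw [Wsub, Subgroup.closure_le]
      rintro x ⟨j, hj, c, hc, rfl⟩
      obtain rfl : j = 0 := Nat.le_zero.mp hj
      rw [h0, Subgroup.mem_bot] at hc
      simp [hc]
    have hx1 : x = 1 := by simpa [Subgroup.mem_bot] using hsub hx
    exact ⟨y, by simp [hx1]⟩
  | succ i ih =>
    intro x hx y
    have main : ∀ y : X, (∃ z, z ^ q = y ^ q * x) ∧ (∃ z, z ^ q = y ^ q * x⁻¹) := by
      refine Subgroup.closure_induction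
        (p := fun x _ => ∀ y : X, (∃ z, z ^ q = y ^ q * x) ∧ (∃ z, z ^ q = y ^ q * x⁻¹))
        ?_ ?_ ?_ ?_ hx
      · rintro s ⟨j, hj, c, hc, rfl⟩ y
        have gen : ∀ c : X, c ∈ H j → ∀ y : X,
            ∃ z, z ^ q = y ^ q * c ^ q ^ (Nat.factorial j) := by
          intro c hc y
          match j, hj with
          | 0, _ =>
            rw [h0, Subgroup.mem_bot] at hc
            exact ⟨y, by simp [hc]⟩
          | (j' + 1), hj =>
            have hj' : j' ≤ i := by omega
            set A := j' * Nat.factorial j' with hA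
            have h1f : 1 ≤ Nat.factorial j' := Nat.one_le_iff_ne_zero.mpr (Nat.factorial_ne_zero j')
            have hble : A + 1 ≤ Nat.factorial (j' + 1) := by
              have e1 : Nat.factorial (j' + 1) = (j' + 1) * Nat.factorial j' := Nat.factorial_succ j'
              have e2 : (j' + 1) * Nat.factorial j' = A + Nat.factorial j' := by rw [hA]; ring
              omega
            set b := Nat.factorial (j' + 1) - (A + 1) with hb
            have hbeq : b + (A + 1) = Nat.factorial (j' + 1) := Nat.sub_add_cancel hble
            have hh' : c ^ q ^ b ∈ H (j' + 1) := pow_mem hc _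
            obtain ⟨ε, hε, heq⟩ := lemA' H q hle hcm h0 j' (c ^ q ^ b) hh' y
            have hpow : (c ^ q ^ b) ^ q ^ (A + 1) = c ^ q ^ (Nat.factorial (j' + 1)) := by
              rw [← pow_mul, ← pow_add, hbeq]
            obtain ⟨z, hz⟩ := ih ε (Wsub_mono H q hj' hε) (y * (c ^ q ^ b) ^ q ^ A)
            refine ⟨z, ?_⟩
            rw [hz, ← heq, hpow]
        refine ⟨gen c hc y, ?_⟩
        have : (c ^ q ^ (Nat.factorial j))⁻¹ = (c⁻¹) ^ q ^ (Nat.factorial j) := by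
          rw [inv_pow]
        rw [this]
        exact gen c⁻¹ (inv_mem hc) y
      · intro y; exact ⟨⟨y, by simp⟩, ⟨y, by simp⟩⟩
      · intro x₁ x₂ _ _ ih₁ ih₂ y
        constructor
        · obtain ⟨z₁, hz₁⟩ := (ih₁ y).1
          obtain ⟨z, hz⟩ := (ih₂ z₁).1
          exact ⟨z, by rw [hz, hz₁, mul_assoc]⟩
        · obtain ⟨z₁, hz₁⟩ := (ih₂ y).2
          obtain ⟨z, hz⟩ := (ih₁ z₁).2
          exact ⟨z, by rw [mul_inv_rev, hz, hz₁, mul_assoc]⟩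
      · intro x _ ihx y
        refine ⟨(ihx y).2, ?_⟩
        simpa using (ihx y).1
    exact (main y).1

include h0 hle hcm in
lemma rootExtract {n : ℕ} (hn : H n = ⊤) :
    ∀ x ∈ powSubgroup X (q ^ (Nat.factorial n)), ∃ z : X, z ^ q = x := by
  intro x hx
  have hsub : powSubgroup X (q ^ (Nat.factorial n)) ≤ Wsub H q n := by
    rw [powSubgroup, Subgroup.closure_le]
    rintro x ⟨g, rfl⟩
    exact Subgroup.subset_closure ⟨n, le_refl n, g, by rw [hn]; trivial, rfl⟩
  obtain ⟨z, hz⟩ := absorb H q hle hcm h0 n x (hsub hx) 1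
  exact ⟨z, by simpa using hz⟩

end Series


lemma factor_tor_bound {A : Type u} [Group A] {P : Set ℕ} (WB : WeaklyBounded P A) (m : ℕ)
    (hm : 0 < m) (hPm : ∀ p : ℕ, p.Prime → p ∣ m → p ∈ P) :
    ∃ t : ℕ, ∀ a : A, (∃ j, a ^ m ^ j = 1) → a ^ m ^ t = 1 := by
  classical
  set Q : ℕ → Prop := fun p => ∃ e, 0 < e ∧ ∀ a : A, (∃ k, a ^ p ^ k = 1) → a ^ e = 1 with hQdef
  have hQ : ∀ p ∈ m.primeFactors, Q p := by
    intro p hp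
    have hpp : p.Prime := Nat.prime_of_mem_primeFactors hp
    obtain ⟨e, he, hee⟩ := WB ⊥ p (hPm p hpp (Nat.dvd_of_mem_primeFactors hp))
    refine ⟨e, he, ?_⟩
    rintro a ⟨k, hk⟩
    set π := QuotientGroup.mk' (⊥ : Subgroup A) with hπ
    have h1 : (π a) ^ e = 1 := hee (π a) ⟨k, by rw [← map_pow, hk, map_one]⟩
    have h2 : a ^ e ∈ π.ker := by rw [MonoidHom.mem_ker, map_pow]; exact h1
    rw [hπ, QuotientGroup.ker_mk'] at h2
    simpa [Subgroup.mem_bot] using h2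
  set e : ℕ → ℕ := fun p => if h : Q p then h.choose else 1 with hedef
  have he : ∀ p, Q p → 0 < e p ∧ ∀ a : A, (∃ k, a ^ p ^ k = 1) → a ^ (e p) = 1 := by
    intro p h
    simp only [hedef, dif_pos h]
    exact h.choose_spec
  refine ⟨∑ p ∈ m.primeFactors, (e p).factorization p, ?_⟩
  set t := ∑ p ∈ m.primeFactors, (e p).factorization p with ht
  rintro a ⟨j, hj⟩
  have hmj : (0:ℕ) < m ^ j := pow_pos hm j
  have hfin : IsOfFinOrder a := isOfFinOrder_iff_pow_eq_one.mpr ⟨m ^ j, hmj, hj⟩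
  set d := orderOf a with hd
  have hd0 : d ≠ 0 := (hfin.orderOf_pos).ne'
  have hdvdj : d ∣ m ^ j := orderOf_dvd_of_pow_eq_one hj
  rw [← orderOf_dvd_iff_pow_eq_one, ← hd,
    ← Nat.factorization_le_iff_dvd hd0 (pow_pos hm t).ne', Finsupp.le_def]
  intro p
  by_cases hpp : p.Prime
  · by_cases hpd : p ∣ d
    · have hpm : p ∣ m := hpp.dvd_of_dvd_pow (dvd_trans hpd hdvdj)
      have hpmem : p ∈ m.primeFactors := Nat.mem_primeFactors.mpr ⟨hpp, hpm, hm.ne'⟩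
      set k := d.factorization p with hk
      have hpkd : p ^ k ∣ d := Nat.ordProj_dvd d p
      have hdk0 : d / p ^ k ≠ 0 :=
        (Nat.div_pos (Nat.le_of_dvd (Nat.pos_of_ne_zero hd0) hpkd) (pow_pos hpp.pos k)).ne'
      have hord : orderOf (a ^ (d / p ^ k)) = p ^ k := by
        rw [orderOf_pow' a hdk0, ← hd, Nat.gcd_eq_right (Nat.div_dvd_of_dvd hpkd)]
        exact Nat.div_div_self hpkd hd0
      have htor : ∃ k', (a ^ (d / p ^ k)) ^ p ^ k' = 1 := by
        refine ⟨k, ?_⟩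
        have hpo := pow_orderOf_eq_one (a ^ (d / p ^ k))
        rwa [hord] at hpo
      have hpe := (he p (hQ p hpmem)).2 _ htor
      have hdvd_e : p ^ k ∣ e p := by rw [← hord]; exact orderOf_dvd_of_pow_eq_one hpe
      have hk_le : k ≤ (e p).factorization p :=
        (hpp.pow_dvd_iff_le_factorization (he p (hQ p hpmem)).1.ne').mp hdvd_e
      have hk_le_t : k ≤ t :=
        le_trans hk_le (Finset.single_le_sum (f := fun p => (e p).factorization p) (fun _ _ => Nat.zero_le _) hpmem)
      rw [Nat.factorization_pow]
      simp only [Finsupp.smul_apply, smul_eq_mul]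
      have h1 : 0 < m.factorization p := hpp.factorization_pos_of_dvd hm.ne' hpm
      calc d.factorization p ≤ t := hk_le_t
        _ ≤ t * m.factorization p := Nat.le_mul_of_pos_right t h1
    · simp [Nat.factorization_eq_zero_of_not_dvd hpd]
  · simp [Nat.factorization_eq_zero_of_not_prime _ hpp]

lemma torsion_bound {X : Type u} [Group X] (P : Set ℕ) (H : ℕ → Subgroup X) (n : ℕ)
    (h0 : H 0 = ⊥) (hn : H n = ⊤) (hle : ∀ i, H i ≤ H (i+1))
    (hcm : ∀ i, ∀ x ∈ H (i+1), ∀ g : X, x * g * x⁻¹ * g⁻¹ ∈ H i)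
    (hfac : ∀ i, ∀ hN : ((H i).subgroupOf (H (i+1))).Normal,
      FactorWeaklyBounded P (H i) (H (i+1)) hN)
    (m : ℕ) (hm : 0 < m) (hPm : ∀ p : ℕ, p.Prime → p ∣ m → p ∈ P) :
    ∃ s : ℕ, ∀ x : X, (∃ j, x ^ m ^ j = 1) → x ^ m ^ s = 1 := by
  have claim : ∀ i, ∃ s, ∀ x ∈ H i, (∃ j, x ^ m ^ j = 1) → x ^ m ^ s = 1 := by
    intro i
    induction i with
    | zero =>
      refine ⟨0, ?_⟩
      rintro x hx -
      rw [h0, Subgroup.mem_bot] at hx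
      simp [hx]
    | succ i ihc =>
      obtain ⟨s, hs⟩ := ihc
      haveI hN : ((H i).subgroupOf (H (i+1))).Normal := by
        constructor
        intro x hx g
        rw [Subgroup.mem_subgroupOf] at hx ⊢
        have hc1 : ((g * x * g⁻¹ : ↥(H (i+1))) : X)
            = ((g : X) * (x : X) * (g : X)⁻¹ * (x : X)⁻¹) * (x : X) := by
          push_cast; group
        rw [hc1]
        exact mul_mem (hcm i (g : X) g.2 (x : X)) hx
      have WB : WeaklyBounded P (↥(H (i+1)) ⧸ (H i).subgroupOf (H (i+1))) := hfac i hN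
      obtain ⟨t, htt⟩ := factor_tor_bound WB m hm hPm
      refine ⟨t + s, ?_⟩
      rintro x hx ⟨j, hj⟩
      set x' : ↥(H (i+1)) := ⟨x, hx⟩ with hx'
      have hx'j : x' ^ m ^ j = 1 := by
        have hcoe : ((x' ^ m ^ j : ↥(H (i+1))) : X) = 1 := by push_cast [hx']; exact hj
        exact (OneMemClass.coe_eq_one).mp hcoe
      set π := QuotientGroup.mk' ((H i).subgroupOf (H (i+1))) with hπ
      have h1 : (π x') ^ m ^ t = 1 := htt (π x') ⟨j, by rw [← map_pow, hx'j, map_one]⟩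
      have h2 : x' ^ m ^ t ∈ (H i).subgroupOf (H (i+1)) := by
        have h2' : x' ^ m ^ t ∈ π.ker := by rw [MonoidHom.mem_ker, map_pow]; exact h1
        rwa [hπ, QuotientGroup.ker_mk'] at h2'
      rw [Subgroup.mem_subgroupOf] at h2
      have h2' : x ^ m ^ t ∈ H i := by
        have hcoe : ((x' ^ m ^ t : ↥(H (i+1))) : X) = x ^ m ^ t := by push_cast [hx']; rfl
        rwa [hcoe] at h2
      have h3 : (x ^ m ^ t) ^ m ^ j = 1 := by
        rw [← pow_mul, mul_comm, pow_mul, hj, one_pow]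
      have h4 := hs _ h2' ⟨j, h3⟩
      rwa [← pow_mul, ← pow_add] at h4
  obtain ⟨s, hs⟩ := claim n
  exact ⟨s, fun x hx => hs x (by rw [hn]; trivial) hx⟩

/-- Proposition 6.2: if `X` is a weakly `C`-bounded nilpotent group and
`Y` is a periodic subgroup whose exponent `m` is finite and is a `𝔓(C)`-number, then
`Y ∩ X^{m^n} = 1` for some `n ≥ 1`. -/
theorem statement16 (C : GroupClass.{u}) (hroot : IsRootClass C) (hper : IsPeriodicClass C)
    (X : Type u) [Group X] (hX : WeaklyBoundedNilpotent (classPrimes C) X)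
    (Y : Subgroup X) (htor : Monoid.IsTorsion ↥Y)
    (hP : IsPNumber (classPrimes C) (Monoid.exponent ↥Y)) :
    ∃ n : ℕ, 1 ≤ n ∧ Y ⊓ powSubgroup X (Monoid.exponent ↥Y ^ n) = ⊥ := by
  classical
  obtain ⟨n, H, h0, hn, hle, hcm, hfac⟩ := hX
  have hP' : 0 < Monoid.exponent ↥Y ∧
      ∀ p : ℕ, p.Prime → p ∣ Monoid.exponent ↥Y → p ∈ classPrimes C := hP
  set m := Monoid.exponent ↥Y with hmdef
  obtain ⟨hm0, hmP⟩ := hP'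
  obtain ⟨s, hs⟩ := torsion_bound (classPrimes C) H n h0 hn hle hcm hfac m hm0 hmP
  have hs1 : ∀ x : X, (∃ j, x ^ m ^ j = 1) → x ^ m ^ (s+1) = 1 := by
    intro x hx
    have h1 := hs x hx
    rw [pow_succ, pow_mul, h1, one_pow]
  refine ⟨(s+1) * Nat.factorial n,
    Nat.mul_pos (Nat.succ_pos s) (Nat.factorial_pos n), ?_⟩
  rw [eq_bot_iff]
  intro x hx
  rw [Subgroup.mem_inf] at hx
  obtain ⟨hxY, hxp⟩ := hx
  rw [pow_mul] at hxp
  obtain ⟨z, hz⟩ := rootExtract H (m ^ (s+1)) hle hcm h0 hn x hxp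
  have hxm : x ^ m = 1 := by
    have h1 : (⟨x, hxY⟩ : ↥Y) ^ m = 1 := Monoid.pow_exponent_eq_one _
    have h2 := congrArg (Subtype.val) h1
    simpa using h2
  have hz2 : z ^ m ^ (s+2) = 1 := by
    have e1 : m ^ (s+2) = m ^ (s+1) * m := by rw [pow_succ]
    rw [e1, pow_mul, hz, hxm]
  have hz3 := hs1 z ⟨s+2, hz2⟩
  have hx1 : x = 1 := by rw [← hz, hz3]
  simp [hx1, Subgroup.mem_bot]

end Paper
end
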